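/- arXiv:2404.01254 — 6 statements merged into one kernel-verified Lean document; each statement's English description precedes it below -/
import Mathlib

section
/- Let G be a finite group, H a subgroup of G, and N a normal subgroup of G. If N ≤ H and H satisfies the partial Π-property in G, then HN/N = H/N satisfies the partial Π-property in G/N. -/
/-- A chief series of a (finite) group `G`. -/
structure ChiefSeries (G : Type*) [Group G] where
  n : ℕ
  s : Fin (n + 1) → Subgroup G
  bot_eq : s 0 = ⊥
  top_eq : s (Fin.last n) = ⊤
  normal : ∀ i, (s i).Normal
  strict : ∀ i : Fin n, s i.castSucc < s i.succ
  chief : ∀ i : Fin n, ∀ N : Subgroup G, N.Normal →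
    s i.castSucc ≤ N → N ≤ s i.succ → N = s i.castSucc ∨ N = s i.succ

variable {G : Type*} [Group G]

/-- The order of the chief factor `s i.succ / s i.castSucc`. -/
noncomputable def ChiefSeries.factorCard (C : ChiefSeries G) (i : Fin C.n) : ℕ :=
  Nat.card (C.s i.succ) / Nat.card (C.s i.castSucc)

/-- The condition of the partial Π-property at the `i`-th chief factor of the chief series `C`:
the index `|G/G_{i-1} : N_{G/G_{i-1}}(HG_{i-1}/G_{i-1} ∩ G_i/G_{i-1})|` is a
`π(HG_{i-1}/G_{i-1} ∩ G_i/G_{i-1})`-number.  Here we use the identifications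
`HG_{i-1}/G_{i-1} ∩ G_i/G_{i-1} = ((H ⊔ G_{i-1}) ⊓ G_i)/G_{i-1}`,
`N_{G/G_{i-1}}(L/G_{i-1}) = N_G(L)/G_{i-1}` for `G_{i-1} ≤ L`, so that the relevant index is
`|G : N_G((H ⊔ G_{i-1}) ⊓ G_i)|` and the order of the intersection is
`|(H ⊔ G_{i-1}) ⊓ G_i| / |G_{i-1}|`. -/
def PartialPiStep (H : Subgroup G) (C : ChiefSeries G) (i : Fin C.n) : Prop :=
  ∀ q : ℕ, q.Prime →
    q ∣ (Subgroup.normalizer (((H ⊔ C.s i.castSucc) ⊓ C.s i.succ : Subgroup G) : Set G)).index →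
    q ∣ Nat.card ((H ⊔ C.s i.castSucc) ⊓ C.s i.succ : Subgroup G) / Nat.card (C.s i.castSucc)

/-- `H` satisfies the partial Π-property in `G`. -/
def PartialPi (H : Subgroup G) : Prop :=
  ∃ C : ChiefSeries G, ∀ i, PartialPiStep H C i

/-- `N` is a minimal normal subgroup of `G`. -/
def IsMinNormal (N : Subgroup G) : Prop :=
  N.Normal ∧ N ≠ ⊥ ∧ ∀ M : Subgroup G, M.Normal → M ≤ N → M = ⊥ ∨ M = N

/-- `B/A` is a chief factor of `G`. -/
def IsChiefFactor (A B : Subgroup G) : Prop :=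
  A.Normal ∧ B.Normal ∧ A < B ∧
    ∀ X : Subgroup G, X.Normal → A ≤ X → X ≤ B → X = A ∨ X = B

/-- `P` is an elementary abelian `p`-subgroup. -/
def IsElemAbelian (p : ℕ) (P : Subgroup G) : Prop :=
  (∀ x ∈ P, ∀ y ∈ P, x * y = y * x) ∧ ∀ x ∈ P, x ^ p = 1

/-- A group is quaternion-free if no section is isomorphic to `Q₈ = QuaternionGroup 2`. -/
def QuaternionFree (P : Type*) [Group P] : Prop :=
  ∀ (K : Subgroup P) (N : Subgroup K) (hN : N.Normal),
    haveI := hN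
    IsEmpty ((K ⧸ N) ≃* QuaternionGroup 2)

/-- `M` is a maximal subgroup of `K`. -/
def IsMaximalIn (M K : Subgroup G) : Prop :=
  M < K ∧ ∀ X : Subgroup G, M < X → X ≤ K → X = K

/-- `Q` is a 2-maximal subgroup of `K`, i.e. a maximal subgroup of a maximal subgroup. -/
def Is2MaximalIn (Q K : Subgroup G) : Prop :=
  ∃ M : Subgroup G, IsMaximalIn Q M ∧ IsMaximalIn M K

/-- The socle: the subgroup generated by all minimal normal subgroups. -/
noncomputable def socleSub (G : Type*) [Group G] : Subgroup G :=
  ⨆ (N : Subgroup G) (_ : IsMinNormal N), N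

/-- The supersoluble hypercenter `Z_U(G)`: the product of all normal subgroups all of whose
`G`-chief factors have prime order. -/
def ZU (G : Type*) [Group G] : Subgroup G :=
  ⨆ (N : Subgroup G) (_ : N.Normal ∧ ∀ A B : Subgroup G, IsChiefFactor A B → B ≤ N →
      (Nat.card B / Nat.card A).Prime), N

/-- The `p`-supersoluble hypercenter `Z_{U_p}(G)`: the product of all normal subgroups all of
whose `G`-chief factors of order divisible by `p` have order `p`. -/
def ZUp (p : ℕ) (G : Type*) [Group G] : Subgroup G :=
  ⨆ (N : Subgroup G) (_ : N.Normal ∧ ∀ A B : Subgroup G, IsChiefFactor A B → B ≤ N →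
      p ∣ Nat.card B / Nat.card A → Nat.card B / Nat.card A = p), N

/-- `G` is `p`-soluble: it has a chief series each of whose factors is a `p`-group or a
`p'`-group. -/
def IsPSolvable (p : ℕ) (G : Type*) [Group G] : Prop :=
  ∃ C : ChiefSeries G, ∀ i : Fin C.n,
    (∃ m : ℕ, C.factorCard i = p ^ m) ∨ ¬ p ∣ C.factorCard i

/-- `G` is `p`-supersoluble: it has a chief series each of whose factors has order `p` or is a
`p'`-group. -/
def IsPSupersolvable (p : ℕ) (G : Type*) [Group G] : Prop :=
  ∃ C : ChiefSeries G, ∀ i : Fin C.n,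
    C.factorCard i = p ∨ ¬ p ∣ C.factorCard i

/-- The `p`-rank of (the `p`-soluble group) `G` is greater than `1`:  `G` is `p`-soluble and has
a chief factor of order `p ^ k` with `k ≥ 2`. -/
def PRankGtOne (p : ℕ) (G : Type*) [Group G] : Prop :=
  IsPSolvable p G ∧ ∃ (C : ChiefSeries G) (i : Fin C.n) (k : ℕ),
    2 ≤ k ∧ C.factorCard i = p ^ k

/-- The subgroup `V` is invariant under conjugation by elements of `H`. -/
def IsHInvariant (H V : Subgroup G) : Prop :=
  ∀ h ∈ H, ∀ v ∈ V, h * v * h⁻¹ ∈ V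

/-- `V` is an irreducible `F_p[H]`-submodule of `P` (here expressed group-theoretically:
a nontrivial `H`-invariant subgroup of `P` with no proper nontrivial `H`-invariant subgroup). -/
def IsIrredHSub (H P V : Subgroup G) : Prop :=
  V ≤ P ∧ V ≠ ⊥ ∧ IsHInvariant H V ∧
    ∀ W : Subgroup G, W ≤ V → IsHInvariant H W → W = ⊥ ∨ W = V

/-- `V` and `W` are `H`-isomorphic: there is a group isomorphism `V ≃ W` commuting with
conjugation by elements of `H`. -/
def ConjIso (H V W : Subgroup G) : Prop :=
  ∃ φ : V ≃* W, ∀ h ∈ H, ∀ (v : G) (hv : v ∈ V) (hv2 : h * v * h⁻¹ ∈ V),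
    ((φ ⟨h * v * h⁻¹, hv2⟩ : W) : G) = h * ((φ ⟨v, hv⟩ : W) : G) * h⁻¹

/-- `V` is an absolutely irreducible `F_p[H]`-submodule of `P`:  it is irreducible and every
`H`-equivariant endomorphism is a power map (i.e. `End_{F_p[H]}(V) ≅ F_p`). -/
def IsAbsIrredSub (H P V : Subgroup G) : Prop :=
  IsIrredHSub H P V ∧
  ∀ φ : V →* V,
    (∀ h ∈ H, ∀ (v : G) (hv : v ∈ V) (hv2 : h * v * h⁻¹ ∈ V),
      ((φ ⟨h * v * h⁻¹, hv2⟩ : V) : G) = h * ((φ ⟨v, hv⟩ : V) : G) * h⁻¹) →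
    ∃ m : ℕ, ∀ v : V, φ v = v ^ m

/-- `Ω_i(D)`: the subgroup generated by the elements of `D` of order dividing `p ^ i`. -/
def omegaSub {P : Type*} [Group P] (D : Subgroup P) (p i : ℕ) : Subgroup P :=
  Subgroup.closure {x : P | x ∈ D ∧ x ^ (p ^ i) = 1}

/-- `D` is a Thompson critical subgroup of the `p`-group `P`: a characteristic subgroup with
`[P,D] ≤ Z(D)`, `C_P(D) = Z(D)` (equivalently `C_P(D) ≤ D`), and such that every nontrivial
`p'`-automorphism of `P` restricts to a nontrivial automorphism of `D`. -/
def IsThompsonCritical {P : Type*} [Group P] (p : ℕ) (D : Subgroup P) : Prop :=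
  D.Characteristic ∧
  ⁅(⊤ : Subgroup P), D⁆ ≤ Subgroup.centralizer (D : Set P) ⊓ D ∧
  Subgroup.centralizer (D : Set P) ≤ D ∧
  ∀ φ : MulAut P, φ ≠ 1 → Nat.Coprime (orderOf φ) p → ∃ x ∈ D, φ x ≠ x



section auxlemmas

variable {G : Type*} {Q : Type*} [Group G] [Group Q]

lemma aux_map_inf (f : G →* Q) {A B : Subgroup G} (h : f.ker ≤ A) :
    A.map f ⊓ B.map f = (A ⊓ B).map f := by
  apply le_antisymm
  · rintro x ⟨⟨a, ha, rfl⟩, b, hb, hab⟩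
    refine ⟨b, ⟨?_, hb⟩, hab⟩
    have : a⁻¹ * b ∈ f.ker := by
      simp [MonoidHom.mem_ker, hab]
    have := A.mul_mem ha (h this)
    simpa using this
  · exact le_inf (Subgroup.map_mono inf_le_left) (Subgroup.map_mono inf_le_right)

lemma aux_map_normalizer_le (f : G →* Q) (K : Subgroup G) :
    (Subgroup.normalizer (K : Set G)).map f ≤ Subgroup.normalizer ((K.map f : Subgroup Q) : Set Q) := by
  rintro x ⟨g, hg, rfl⟩
  rw [Subgroup.mem_normalizer_iff]
  intro y
  constructor
  · rintro ⟨k, hk, rfl⟩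
    exact ⟨g * k * g⁻¹, (Subgroup.mem_normalizer_iff.mp hg k).mp hk, by simp [map_mul]⟩
  · rintro ⟨k, hk, hke⟩
    have : y = f (g⁻¹ * k * g) := by
      have : y = (f g)⁻¹ * (f g * y * (f g)⁻¹) * f g := by group
      rw [this, ← hke]; simp [map_mul]
    rw [this]
    refine ⟨g⁻¹ * k * g, ?_, rfl⟩
    have := (Subgroup.mem_normalizer_iff.mp ((Subgroup.normalizer (K : Set G)).inv_mem hg) k).mp hk
    simpa [mul_assoc] using this

lemma aux_card_map [Finite G] (f : G →* Q) (S : Subgroup G) :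
    Nat.card S = Nat.card (S.map f) * Nat.card (f.ker ⊓ S : Subgroup G) := by
  have h1 : Nat.card S = Nat.card (S ⧸ (f.domRestrict S).ker) * Nat.card ((f.domRestrict S).ker) :=
    Subgroup.card_eq_card_quotient_mul_card_subgroup _
  have h2 : Nat.card (S ⧸ (f.domRestrict S).ker) = Nat.card ((f.domRestrict S).range) :=
    Nat.card_congr (QuotientGroup.quotientKerEquivRange (f.domRestrict S)).toEquiv
  have h3 : (f.domRestrict S).range = S.map f := MonoidHom.domRestrict_range S f
  have h4 : Nat.card ((f.domRestrict S).ker) = Nat.card (f.ker ⊓ S : Subgroup G) := by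
    rw [MonoidHom.ker_domRestrict, ← Subgroup.inf_subgroupOf_right]
    exact Nat.card_congr (Subgroup.subgroupOfEquivOfLe inf_le_right).toEquiv
  rw [h1, h2, h3, h4]

/-- The data carried by a single "genuine" step of the image series. -/
def GoodStep (H' A' B' : Subgroup Q) : Prop :=
  A' < B' ∧ B'.Normal ∧
    (∀ X : Subgroup Q, X.Normal → A' ≤ X → X ≤ B' → X = A' ∨ X = B') ∧
    (∀ q : ℕ, q.Prime → q ∣ (Subgroup.normalizer (((H' ⊔ A') ⊓ B' : Subgroup Q) : Set Q)).index →
      q ∣ Nat.card ((H' ⊔ A') ⊓ B' : Subgroup Q) / Nat.card A')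

lemma aux_dedup (Good : Subgroup Q → Subgroup Q → Prop) :
    ∀ (n : ℕ) (f : Fin (n + 1) → Subgroup Q), f (Fin.last n) = ⊤ →
      (∀ i : Fin n, f i.castSucc = f i.succ ∨ Good (f i.castSucc) (f i.succ)) →
      ∃ (m : ℕ) (g : Fin (m + 1) → Subgroup Q), g 0 = f 0 ∧ g (Fin.last m) = ⊤ ∧
        ∀ j : Fin m, Good (g j.castSucc) (g j.succ) := by
  intro n
  induction n with
  | zero =>
    intro f htop _
    exact ⟨0, f, rfl, htop, fun j => j.elim0⟩
  | succ n ih =>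
    intro f htop hstep
    obtain ⟨m, g, hg0, hgtop, hgstep⟩ := ih (f ∘ Fin.succ)
      (by simpa using htop)
      (by
        intro i
        have := hstep i.succ
        exact this)
    have hg0' : g 0 = f 1 := hg0
    rcases hstep 0 with h | h
    · exact ⟨m, g, by rw [hg0']; exact h.symm, hgtop, hgstep⟩
    · refine ⟨m + 1, Fin.cons (f 0) g, rfl, ?_, ?_⟩
      · rw [show Fin.last (m + 1) = Fin.succ (Fin.last m) by rfl, Fin.cons_succ]
        exact hgtop
      · intro j
        induction j using Fin.cases with
        | zero =>
          have h0 : (Fin.cons (f 0) g : Fin (m + 2) → Subgroup Q) (0 : Fin (m+1)).castSucc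
              = f 0 := rfl
          have h1 : (Fin.cons (f 0) g : Fin (m + 2) → Subgroup Q) (0 : Fin (m+1)).succ
              = g 0 := Fin.cons_succ _ _ _
          rw [h0, h1, hg0']
          exact h
        | succ k =>
          have h0 : (Fin.cons (f 0) g : Fin (m + 2) → Subgroup Q) k.succ.castSucc
              = g k.castSucc := by
            rw [← Fin.succ_castSucc, Fin.cons_succ]
          have h1 : (Fin.cons (f 0) g : Fin (m + 2) → Subgroup Q) k.succ.succ
              = g k.succ := Fin.cons_succ _ _ _
          rw [h0, h1]
          exact hgstep k

lemma aux_step [Finite G] (H N : Subgroup G) [N.Normal] (hle : N ≤ H)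
    (A B : Subgroup G) (hAn : A.Normal) (hBn : B.Normal) (hAB : A < B)
    (hchief : ∀ X : Subgroup G, X.Normal → A ≤ X → X ≤ B → X = A ∨ X = B)
    (hpi : ∀ q : ℕ, q.Prime → q ∣ (Subgroup.normalizer (((H ⊔ A) ⊓ B : Subgroup G) : Set G)).index →
      q ∣ Nat.card ((H ⊔ A) ⊓ B : Subgroup G) / Nat.card A) :
    A.map (QuotientGroup.mk' N) = B.map (QuotientGroup.mk' N) ∨
      GoodStep (H.map (QuotientGroup.mk' N)) (A.map (QuotientGroup.mk' N))
        (B.map (QuotientGroup.mk' N)) := by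
  set π := QuotientGroup.mk' N with hπ
  have hker : π.ker = N := QuotientGroup.ker_mk' N
  have hsurj : Function.Surjective π := QuotientGroup.mk'_surjective N
  have hmapN : N.map π = ⊥ := (Subgroup.map_eq_bot_iff _).mpr hker.ge
  by_cases hBA : B ≤ A ⊔ N
  · left
    refine le_antisymm (Subgroup.map_mono hAB.le) ?_
    calc B.map π ≤ (A ⊔ N).map π := Subgroup.map_mono hBA
      _ = A.map π ⊔ N.map π := Subgroup.map_sup _ _ _
      _ = A.map π := by rw [hmapN, sup_bot_eq]
  · right
    haveI : (A ⊔ N).Normal := Subgroup.sup_normal A N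
    have hstar : B ⊓ (A ⊔ N) = A := by
      rcases hchief (B ⊓ (A ⊔ N)) inferInstance
          (le_inf hAB.le le_sup_left) inf_le_left with h | h
      · exact h
      · exact absurd (h ▸ inf_le_right) hBA
    refine ⟨?_, hBn.map π hsurj, ?_, ?_⟩
    · refine lt_of_le_of_ne (Subgroup.map_mono hAB.le) ?_
      intro heq
      apply hBA
      calc B ≤ (B.map π).comap π := Subgroup.le_comap_map _ _
        _ = (A.map π).comap π := by rw [heq]
        _ = A ⊔ N := by rw [Subgroup.comap_map_eq, hker]
    · intro X hXn hX1 hX2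
      set Y := X.comap π with hY
      haveI : Y.Normal := Subgroup.Normal.comap hXn π
      have hNY : N ≤ Y := by
        intro x hx
        have hx1 : π x = 1 := by rwa [← MonoidHom.mem_ker, hker]
        simp only [hY, Subgroup.mem_comap, hx1]; exact X.one_mem
      have hAY : A ≤ Y := Subgroup.map_le_iff_le_comap.mp hX1
      have hYBN : Y ≤ B ⊔ N := by
        calc Y ≤ (B.map π).comap π := Subgroup.comap_mono hX2
          _ = B ⊔ N := by rw [Subgroup.comap_map_eq, hker]
      have hYdec : Y = (Y ⊓ B) ⊔ N := by
        apply le_antisymm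
        · intro y hy
          have hy' : y ∈ (↑(B ⊔ N) : Set G) := hYBN hy
          rw [Subgroup.mul_normal] at hy'
          obtain ⟨b, hb, n, hn, rfl⟩ := hy'
          have hbY : b ∈ Y := by
            have := Y.mul_mem hy (Y.inv_mem (hNY hn))
            simpa using this
          exact Subgroup.mul_mem _ (Subgroup.mem_sup_left ⟨hbY, hb⟩) (Subgroup.mem_sup_right hn)
        · exact sup_le inf_le_left hNY
      have hXmap : X = Y.map π := (Subgroup.map_comap_eq_self_of_surjective hsurj X).symm
      have hXmap' : X = (Y ⊓ B).map π := by
        rw [hXmap]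
        conv_lhs => rw [hYdec]
        rw [Subgroup.map_sup, hmapN, sup_bot_eq]
      haveI : (Y ⊓ B).Normal := Subgroup.normal_inf_normal Y B
      rcases hchief (Y ⊓ B) inferInstance (le_inf hAY hAB.le) inf_le_right with h | h
      · left; rw [hXmap', h]
      · right; rw [hXmap', h]
    · intro q hq hdvd
      set K := (H ⊔ A) ⊓ B with hK
      have hNHA : N ≤ H ⊔ A := hle.trans le_sup_left
      have hmapK : (H.map π ⊔ A.map π) ⊓ B.map π = K.map π := by
        rw [← Subgroup.map_sup]
        exact aux_map_inf π (hker.le.trans hNHA)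
      have hAK : A ≤ K := le_inf le_sup_right hAB.le
      have hNnorm : N ≤ (Subgroup.normalizer (K : Set G)) := by
        intro n hn
        rw [Subgroup.mem_normalizer_iff]
        intro k
        constructor
        · rintro ⟨hk1, hk2⟩
          exact ⟨Subgroup.mul_mem _ (Subgroup.mul_mem _ (hNHA hn) hk1)
            (Subgroup.inv_mem _ (hNHA hn)), hBn.conj_mem k hk2 n⟩
        · rintro ⟨hk1, hk2⟩
          have e : k = n⁻¹ * (n * k * n⁻¹) * n := by group
          constructor
          · rw [e]
            exact Subgroup.mul_mem _ (Subgroup.mul_mem _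
              (Subgroup.inv_mem _ (hNHA hn)) hk1) (hNHA hn)
          · rw [e]
            simpa using hBn.conj_mem _ hk2 n⁻¹
      have hidx : q ∣ (Subgroup.normalizer (K : Set G)).index := by
        rw [hmapK] at hdvd
        have h1 : (Subgroup.normalizer ((K.map π : Subgroup (G ⧸ N)) : Set (G ⧸ N))).index ∣ ((Subgroup.normalizer (K : Set G)).map π).index :=
          Subgroup.index_dvd_of_le (aux_map_normalizer_le π K)
        have h2 : ((Subgroup.normalizer (K : Set G)).map π).index = (Subgroup.normalizer (K : Set G)).index :=
          Subgroup.index_map_eq (Subgroup.normalizer (K : Set G)) hsurj (hker.le.trans hNnorm)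
        rw [← h2]
        exact dvd_trans hdvd h1
      have hmain : q ∣ Nat.card K / Nat.card A := hpi q hq hidx
      have hKN : π.ker ⊓ K = π.ker ⊓ A := by
        apply le_antisymm
        · rintro x ⟨hx1, hx2⟩
          have hxA : x ∈ A := by
            rw [← hstar]
            refine ⟨hx2.2, Subgroup.mem_sup_right (hker ▸ hx1)⟩
          exact ⟨hx1, hxA⟩
        · exact le_inf inf_le_left ((inf_le_right).trans hAK)
      have cardK : Nat.card K = Nat.card (K.map π) * Nat.card (π.ker ⊓ A : Subgroup G) := by
        rw [← hKN]; exact aux_card_map π K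
      have cardA : Nat.card A = Nat.card (A.map π) * Nat.card (π.ker ⊓ A : Subgroup G) :=
        aux_card_map π A
      have dpos : 0 < Nat.card (π.ker ⊓ A : Subgroup G) := Nat.card_pos
      rw [hmapK]
      have : Nat.card (K.map π) / Nat.card (A.map π) = Nat.card K / Nat.card A := by
        rw [cardK, cardA, Nat.mul_div_mul_right _ _ dpos]
      rw [this]
      exact hmain

end auxlemmas


theorem statement_0 {G : Type*} [Group G] [Finite G] (H N : Subgroup G) [N.Normal]
    (hle : N ≤ H) (hH : PartialPi H) :
    PartialPi (H.map (QuotientGroup.mk' N)) := by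
  obtain ⟨C, hC⟩ := hH
  set π := QuotientGroup.mk' N with hπ
  set H' := H.map π with hH'
  set f : Fin (C.n + 1) → Subgroup (G ⧸ N) := fun i => (C.s i).map π with hf
  have htop : f (Fin.last C.n) = ⊤ := by
    simp only [hf, C.top_eq]
    exact Subgroup.map_top_of_surjective π (QuotientGroup.mk'_surjective N)
  have hsteps : ∀ i : Fin C.n,
      f i.castSucc = f i.succ ∨ GoodStep H' (f i.castSucc) (f i.succ) := fun i =>
    aux_step H N hle (C.s i.castSucc) (C.s i.succ) (C.normal _) (C.normal _)
      (C.strict i) (C.chief i) (hC i)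
  obtain ⟨m, g, hg0, hgtop, hgstep⟩ := aux_dedup (GoodStep H') C.n f htop hsteps
  have hgbot : g 0 = ⊥ := by
    rw [hg0]
    simp only [hf, C.bot_eq, Subgroup.map_bot]
  have hnormal : ∀ i : Fin (m + 1), (g i).Normal := by
    intro i
    induction i using Fin.cases with
    | zero => rw [hgbot]; infer_instance
    | succ j => exact (hgstep j).2.1
  refine ⟨⟨m, g, hgbot, hgtop, hnormal, fun j => (hgstep j).1,
    fun j => (hgstep j).2.2.1⟩, ?_⟩
  intro j
  exact (hgstep j).2.2.2
end

section
/- Let G be a finite group, H a subgroup of G, and N a normal subgroup of G with gcd(|H|,|N|) = 1. If H satisfies the partial Π-property in G, then HN/N satisfies the partial Π-property in G/N. -/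
variable {G : Type*} [Group G]

section AuxForStatement1

open scoped Pointwise

variable {G : Type*} [Group G]

private lemma mem_sup_normal_iff' {X Y : Subgroup G} [Y.Normal] {g : G} (hg : g ∈ X ⊔ Y) :
    ∃ x ∈ X, ∃ y ∈ Y, g = x * y := by
  have : g ∈ (X : Set G) * (Y : Set G) := by rw [← Subgroup.mul_normal]; exact hg
  obtain ⟨x, hx, y, hy, h⟩ := this
  exact ⟨x, hx, y, hy, h.symm⟩

/-- Coprimality: `H ⊓ (N ⊔ B) = H ⊓ B` for normal `N, B` with `(|H|, |N|) = 1`. -/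
private lemma inf_sup_normal_eq_inf [Finite G] {H N B : Subgroup G} [N.Normal] [B.Normal]
    (hcop : Nat.Coprime (Nat.card H) (Nat.card N)) : H ⊓ (N ⊔ B) = H ⊓ B := by
  refine le_antisymm ?_ (le_inf inf_le_left (inf_le_right.trans le_sup_right))
  rintro h ⟨hH, hNB⟩
  refine ⟨hH, ?_⟩
  set ψ : G →* G ⧸ B := QuotientGroup.mk' B with hψdef
  have hmem : ψ h ∈ N.map ψ := by
    have hB : B.map ψ = ⊥ := by
      rw [Subgroup.map_eq_bot_iff, QuotientGroup.ker_mk']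
    have : (N ⊔ B).map ψ = N.map ψ := by
      rw [Subgroup.map_sup, hB, sup_bot_eq]
    rw [← this]
    exact Subgroup.mem_map_of_mem ψ hNB
  have h1 : orderOf (ψ h) ∣ Nat.card H :=
    (orderOf_map_dvd ψ h).trans (Subgroup.orderOf_dvd_natCard H hH)
  have h2 : orderOf (ψ h) ∣ Nat.card N := by
    refine (Subgroup.orderOf_dvd_natCard (N.map ψ) hmem).trans ?_
    have hdvd := Subgroup.card_dvd_of_surjective ((ψ.domRestrict N).rangeRestrict)
      (MonoidHom.rangeRestrict_surjective _)
    rwa [MonoidHom.restrict_range] at hdvd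
  have : orderOf (ψ h) = 1 := Nat.eq_one_of_dvd_coprimes hcop h1 h2
  have hψ1 : ψ h = 1 := orderOf_eq_one_iff.mp this
  have hker : h ∈ ψ.ker := hψ1
  rwa [hψdef, QuotientGroup.ker_mk'] at hker

/-- Dedekind: `(H ⊔ A) ⊓ B = (H ⊓ B) ⊔ A` for `A` normal with `A ≤ B`. -/
private lemma sup_inf_eq_of_normal {H A B : Subgroup G} [A.Normal] (hAB : A ≤ B) :
    (H ⊔ A) ⊓ B = (H ⊓ B) ⊔ A := by
  refine le_antisymm ?_ (sup_le (le_inf (inf_le_left.trans le_sup_left) inf_le_right)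
    (le_inf le_sup_right hAB))
  rintro x ⟨hx1, hxB⟩
  obtain ⟨h, hh, a, ha, rfl⟩ := mem_sup_normal_iff' hx1
  have hhB : h ∈ B := by
    have : h = h * a * a⁻¹ := by group
    rw [this]
    exact mul_mem hxB (inv_mem (hAB ha))
  exact Subgroup.mul_mem _ (Subgroup.mem_sup_left ⟨hh, hhB⟩) (Subgroup.mem_sup_right ha)

/-- Dedekind for intersections: if `N ≤ Y` and `N` normal, `Y ⊓ (S ⊔ N) = (Y ⊓ S) ⊔ N`. -/
private lemma inf_sup_normal_of_le {Y S N : Subgroup G} [N.Normal] (hNY : N ≤ Y) :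
    Y ⊓ (S ⊔ N) = (Y ⊓ S) ⊔ N := by
  refine le_antisymm ?_ (sup_le (le_inf inf_le_left (inf_le_right.trans le_sup_left))
    (le_inf hNY le_sup_right))
  rintro y ⟨hy, hySN⟩
  obtain ⟨s, hs, n, hn, rfl⟩ := mem_sup_normal_iff' hySN
  have hsY : s ∈ Y := by
    have : s = s * n * n⁻¹ := by group
    rw [this]
    exact mul_mem hy (inv_mem (hNY hn))
  exact Subgroup.mul_mem _ (Subgroup.mem_sup_left ⟨hsY, hs⟩) (Subgroup.mem_sup_right hn)

private lemma normalizer_le_sup_normal (N D : Subgroup G) [N.Normal] :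
    Subgroup.normalizer (D : Set G) ≤ Subgroup.normalizer ((N ⊔ D : Subgroup G) : Set G) := by
  intro g hg
  rw [Subgroup.mem_normalizer_iff] at hg ⊢
  intro h
  constructor
  · intro hh
    obtain ⟨d, hd, n, hn, rfl⟩ := mem_sup_normal_iff' (sup_comm N D ▸ hh : h ∈ D ⊔ N)
    have : g * (d * n) * g⁻¹ = (g * d * g⁻¹) * (g * n * g⁻¹) := by group
    rw [this]
    exact mul_mem (Subgroup.mem_sup_right ((hg d).mp hd))
      (Subgroup.mem_sup_left (‹N.Normal›.conj_mem n hn g))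
  · intro hh
    obtain ⟨d, hd, n, hn, hnd⟩ := mem_sup_normal_iff'
      (sup_comm N D ▸ hh : g * h * g⁻¹ ∈ D ⊔ N)
    have hdec : h = (g⁻¹ * d * g) * (g⁻¹ * n * g) := by
      have : h = g⁻¹ * (g * h * g⁻¹) * g := by group
      rw [this, hnd]; group
    rw [hdec]
    refine mul_mem (Subgroup.mem_sup_right ?_) (Subgroup.mem_sup_left ?_)
    · exact (hg (g⁻¹ * d * g)).mpr (by simpa [mul_assoc] using hd)
    · simpa using ‹N.Normal›.conj_mem n hn g⁻¹

private lemma card_div_card_eq_relindex [Finite G] {X Y : Subgroup G} (hXY : X ≤ Y) :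
    Nat.card Y / Nat.card X = X.relIndex Y := by
  have h1 : X.relIndex Y * Nat.card X = Nat.card Y := by
    have h2 := Subgroup.card_mul_index (X.subgroupOf Y)
    have h3 : Nat.card (X.subgroupOf Y) = Nat.card X :=
      Nat.card_congr (Subgroup.subgroupOfEquivOfLe hXY).toEquiv
    rw [h3] at h2
    rw [Subgroup.relIndex, mul_comm]
    exact h2
  rw [← h1, Nat.mul_div_cancel _ Nat.card_pos]

private lemma card_map_mk' [Finite G] {N X : Subgroup G} [N.Normal] (hNX : N ≤ X) :
    Nat.card (X.map (QuotientGroup.mk' N)) = N.relIndex X := by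
  set ψ : G →* G ⧸ N := QuotientGroup.mk' N with hψdef
  have hrange : (ψ.domRestrict X).range = X.map ψ := MonoidHom.restrict_range X ψ
  have hker : (ψ.domRestrict X).ker = N.subgroupOf X := by
    ext x
    simp [MonoidHom.mem_ker, Subgroup.mem_subgroupOf, hψdef, QuotientGroup.eq_one_iff]
  calc Nat.card (X.map ψ) = Nat.card (ψ.domRestrict X).range := by rw [hrange]
    _ = Nat.card (X ⧸ (ψ.domRestrict X).ker) :=
        (Nat.card_congr (QuotientGroup.quotientKerEquivRange (ψ.domRestrict X)).toEquiv).symm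
    _ = ((ψ.domRestrict X).ker).index := (Subgroup.index_eq_card _).symm
    _ = N.relIndex X := by rw [hker]; rfl

private lemma map_inf_map {N X Y : Subgroup G} [N.Normal] (hX : N ≤ X) (hY : N ≤ Y) :
    (X.map (QuotientGroup.mk' N)) ⊓ (Y.map (QuotientGroup.mk' N))
      = (X ⊓ Y).map (QuotientGroup.mk' N) := by
  set ψ : G →* G ⧸ N := QuotientGroup.mk' N
  have hs : Function.Surjective ψ := QuotientGroup.mk'_surjective N
  rw [← Subgroup.map_comap_eq_self_of_surjective hs (X.map ψ ⊓ Y.map ψ), Subgroup.comap_inf,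
    Subgroup.comap_map_eq, Subgroup.comap_map_eq, QuotientGroup.ker_mk',
    sup_eq_left.mpr hX, sup_eq_left.mpr hY]

private lemma index_normalizer_map {N K : Subgroup G} [N.Normal] (hNK : N ≤ K) :
    (Subgroup.normalizer ((K.map (QuotientGroup.mk' N) : Subgroup (G ⧸ N)) : Set (G ⧸ N))).index
      = (Subgroup.normalizer (K : Set G)).index := by
  have hs : Function.Surjective (QuotientGroup.mk' N) := QuotientGroup.mk'_surjective N
  have h1 : (Subgroup.normalizer ((K.map (QuotientGroup.mk' N) : Subgroup (G ⧸ N)) : Set (G ⧸ N))).comap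
      (QuotientGroup.mk' N) = Subgroup.normalizer (K : Set G) := by
    rw [Subgroup.comap_normalizer_eq_of_surjective _ hs, Subgroup.comap_map_eq,
      QuotientGroup.ker_mk', sup_eq_left.mpr hNK]
  have h2 := Subgroup.index_comap_of_surjective
    (H := Subgroup.normalizer ((K.map (QuotientGroup.mk' N) : Subgroup (G ⧸ N)) : Set (G ⧸ N))) hs
  rw [h1] at h2
  exact h2.symm

end AuxForStatement1

section DedupLayer

variable {G : Type*} [Group G]

private lemma chiefSeries_strictMono (C : ChiefSeries G) : StrictMono C.s :=
  Fin.strictMono_iff_lt_succ.mpr C.strict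

variable (N : Subgroup G) [N.Normal] (C : ChiefSeries G)

private noncomputable def auxF (k : ℕ) : Subgroup (G ⧸ N) :=
  ((C.s ⟨min k C.n, by omega⟩) ⊔ N).map (QuotientGroup.mk' N)

private lemma auxF_mono : Monotone (auxF N C) := by
  intro a b hab
  exact Subgroup.map_mono (sup_le_sup_right
    ((chiefSeries_strictMono C).monotone (by simp [Fin.le_def]; omega)) N)

private lemma auxF_rep (k : ℕ) (hk : k ≤ C.n) :
    auxF N C k = ((C.s ⟨k, by omega⟩) ⊔ N).map (QuotientGroup.mk' N) := by
  unfold auxF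
  have : (⟨min k C.n, by omega⟩ : Fin (C.n + 1)) = ⟨k, by omega⟩ :=
    Fin.ext (by simp [Nat.min_eq_left hk])
  rw [this]

private lemma auxF_zero : auxF N C 0 = ⊥ := by
  rw [auxF_rep N C 0 (Nat.zero_le _)]
  have h0 : (⟨0, by omega⟩ : Fin (C.n + 1)) = 0 := rfl
  rw [h0, C.bot_eq, bot_sup_eq, Subgroup.map_eq_bot_iff, QuotientGroup.ker_mk']

private lemma auxF_top (k : ℕ) (hk : C.n ≤ k) : auxF N C k = ⊤ := by
  unfold auxF
  have : (⟨min k C.n, by omega⟩ : Fin (C.n + 1)) = Fin.last C.n :=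
    Fin.ext (by simp [Fin.last, Nat.min_eq_right hk])
  rw [this, C.top_eq, top_sup_eq, Subgroup.map_top_of_surjective _
    (QuotientGroup.mk'_surjective N)]

open Classical in
private noncomputable def auxJ : Finset ℕ :=
  (Finset.range C.n).filter fun i => auxF N C i ≠ auxF N C (i + 1)

private noncomputable def auxm : ℕ := (auxJ N C).card

private noncomputable def auxE (k : Fin (auxm N C)) : ℕ :=
  (((auxJ N C).orderIsoOfFin rfl) k : ℕ)

private lemma auxE_mem (k : Fin (auxm N C)) : auxE N C k ∈ auxJ N C :=
  (((auxJ N C).orderIsoOfFin rfl) k).2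

private lemma auxE_lt (k : Fin (auxm N C)) : auxE N C k < C.n := by
  classical
  have := auxE_mem N C k
  rw [auxJ, Finset.mem_filter, Finset.mem_range] at this
  exact this.1

private lemma auxE_jump (k : Fin (auxm N C)) :
    auxF N C (auxE N C k) ≠ auxF N C (auxE N C k + 1) := by
  classical
  have := auxE_mem N C k
  rw [auxJ, Finset.mem_filter] at this
  exact this.2

private lemma auxE_strictMono : StrictMono (auxE N C) := fun k l h =>
  Subtype.coe_lt_coe.mpr (((auxJ N C).orderIsoOfFin rfl).strictMono h)

private lemma auxE_surj {i : ℕ} (hi : i ∈ auxJ N C) : ∃ k, auxE N C k = i :=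
  ⟨((auxJ N C).orderIsoOfFin rfl).symm ⟨i, hi⟩, by
    simp [auxE]⟩

private lemma auxF_succ_of_not_mem (i : ℕ) (hi : i ∉ auxJ N C) :
    auxF N C i = auxF N C (i + 1) := by
  classical
  by_cases h : i < C.n
  · rw [auxJ, Finset.mem_filter, Finset.mem_range] at hi
    push_neg at hi
    exact not_not.mp (fun hne => hne (hi h))
  · rw [auxF_top N C i (by omega), auxF_top N C (i+1) (by omega)]

private lemma auxF_const (a b : ℕ) (hab : a ≤ b)
    (hno : ∀ i, a ≤ i → i < b → i ∉ auxJ N C) : auxF N C a = auxF N C b := by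
  induction b, hab using Nat.le_induction with
  | base => rfl
  | succ b hab ih =>
    rw [ih (fun i h1 h2 => hno i h1 (by omega)),
      auxF_succ_of_not_mem N C b (hno b hab (by omega))]

private noncomputable def auxs (j : Fin (auxm N C + 1)) : Subgroup (G ⧸ N) :=
  if h : (j : ℕ) < auxm N C then auxF N C (auxE N C ⟨j, h⟩) else ⊤

private lemma auxs_castSucc (j : Fin (auxm N C)) :
    auxs N C j.castSucc = auxF N C (auxE N C j) := by
  have h1 : ((j.castSucc : Fin (auxm N C + 1)) : ℕ) < auxm N C := by simp [j.isLt]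
  rw [auxs, dif_pos h1]
  have : (⟨((j.castSucc : Fin (auxm N C + 1)) : ℕ), h1⟩ : Fin (auxm N C)) = j :=
    Fin.ext (by simp)
  rw [this]

private lemma auxs_succ (j : Fin (auxm N C)) :
    auxs N C j.succ = auxF N C (auxE N C j + 1) := by
  have hval : ((j.succ : Fin (auxm N C + 1)) : ℕ) = (j : ℕ) + 1 := rfl
  by_cases h : (j : ℕ) + 1 < auxm N C
  · rw [auxs, dif_pos (by omega)]
    have heq : (⟨((j.succ : Fin (auxm N C + 1)) : ℕ), by omega⟩ : Fin (auxm N C))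
        = ⟨(j : ℕ) + 1, h⟩ := Fin.ext (by simp)
    rw [heq]
    refine (auxF_const N C (auxE N C j + 1) (auxE N C ⟨(j : ℕ) + 1, h⟩)
      (auxE_strictMono N C (by simp [Fin.lt_def])) ?_).symm
    intro i h1 h2 hmem
    obtain ⟨l, rfl⟩ := auxE_surj N C hmem
    have hl1 : j < l := (auxE_strictMono N C).lt_iff_lt.mp (by omega)
    have hl2 : l < (⟨(j : ℕ) + 1, h⟩ : Fin (auxm N C)) := (auxE_strictMono N C).lt_iff_lt.mp h2
    rw [Fin.lt_def] at hl1 hl2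
    simp at hl2
    omega
  · rw [auxs, dif_neg (by omega)]
    refine ((auxF_const N C (auxE N C j + 1) C.n (auxE_lt N C j) ?_).trans
      (auxF_top N C C.n le_rfl)).symm
    intro i h1 h2 hmem
    obtain ⟨l, rfl⟩ := auxE_surj N C hmem
    have hl1 : j < l := (auxE_strictMono N C).lt_iff_lt.mp (by omega)
    rw [Fin.lt_def] at hl1
    have := l.isLt
    omega

end DedupLayer

section FieldsLayer

variable {G : Type*} [Group G] (N : Subgroup G) [N.Normal] (C : ChiefSeries G)

private lemma auxs_bot : auxs N C 0 = ⊥ := by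
  by_cases hm0 : 0 < auxm N C
  · have h0 : ((0 : Fin (auxm N C + 1)) : ℕ) < auxm N C := by simpa using hm0
    rw [auxs, dif_pos h0]
    have hc : auxF N C 0 = auxF N C (auxE N C ⟨((0 : Fin (auxm N C + 1)) : ℕ), h0⟩) := by
      refine auxF_const N C 0 _ (Nat.zero_le _) ?_
      intro i _ hi hmem
      obtain ⟨l, rfl⟩ := auxE_surj N C hmem
      have hle : auxE N C ⟨((0 : Fin (auxm N C + 1)) : ℕ), h0⟩ ≤ auxE N C l :=
        (auxE_strictMono N C).monotone (by simp [Fin.le_def])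
      omega
    rw [← hc, auxF_zero]
  · rw [auxs, dif_neg (by simpa using hm0)]
    have hm : auxm N C = 0 := by omega
    have hJe : auxJ N C = ∅ := Finset.card_eq_zero.mp hm
    have h1 : auxF N C 0 = auxF N C C.n :=
      auxF_const N C 0 C.n (Nat.zero_le _) (fun i _ _ => by simp [hJe])
    rw [auxF_zero, auxF_top N C C.n le_rfl] at h1
    exact h1.symm

private lemma auxs_top : auxs N C (Fin.last (auxm N C)) = ⊤ := by
  rw [auxs, dif_neg (by simp [Fin.last])]

private lemma auxs_normal (j : Fin (auxm N C + 1)) : (auxs N C j).Normal := by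
  rw [auxs]
  by_cases h : (j : ℕ) < auxm N C
  · rw [dif_pos h]
    unfold auxF
    haveI := C.normal ⟨min (auxE N C ⟨j, h⟩) C.n, by omega⟩
    exact Subgroup.Normal.map inferInstance _ (QuotientGroup.mk'_surjective N)
  · rw [dif_neg h]
    infer_instance

private lemma auxs_strict (j : Fin (auxm N C)) :
    auxs N C j.castSucc < auxs N C j.succ := by
  rw [auxs_castSucc, auxs_succ]
  exact lt_of_le_of_ne (auxF_mono N C (Nat.le_succ _)) (auxE_jump N C j)

private lemma auxs_chief (j : Fin (auxm N C)) (X : Subgroup (G ⧸ N)) (hX : X.Normal)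
    (h1 : auxs N C j.castSucc ≤ X) (h2 : X ≤ auxs N C j.succ) :
    X = auxs N C j.castSucc ∨ X = auxs N C j.succ := by
  rw [auxs_castSucc] at h1
  rw [auxs_succ] at h2
  rw [auxs_castSucc, auxs_succ]
  rw [auxF_rep N C _ (auxE_lt N C j).le] at h1
  rw [auxF_rep N C _ (auxE_lt N C j)] at h2
  rw [auxF_rep N C _ (auxE_lt N C j).le, auxF_rep N C _ (auxE_lt N C j)]
  set i : Fin C.n := ⟨auxE N C j, auxE_lt N C j⟩ with hidef
  have hcs : (⟨auxE N C j, Nat.lt_succ_of_lt (auxE_lt N C j)⟩ : Fin (C.n + 1)) = i.castSucc := rfl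
  have hsc : (⟨auxE N C j + 1, Nat.succ_lt_succ (auxE_lt N C j)⟩ : Fin (C.n + 1)) = i.succ := rfl
  rw [hcs] at h1 ⊢
  rw [hsc] at h2 ⊢
  set A := C.s i.castSucc with hA
  set B := C.s i.succ with hB
  haveI : A.Normal := C.normal i.castSucc
  haveI : B.Normal := C.normal i.succ
  set ψ : G →* G ⧸ N := QuotientGroup.mk' N with hψ
  have hs : Function.Surjective ψ := QuotientGroup.mk'_surjective N
  set Y := X.comap ψ with hY
  haveI : Y.Normal := hX.comap ψ
  have hNY : N ≤ Y := by
    intro x hx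
    show ψ x ∈ X
    have : ψ x = 1 := (QuotientGroup.eq_one_iff x).mpr hx
    rw [this]; exact X.one_mem
  have hAY : A ⊔ N ≤ Y := le_trans (Subgroup.le_comap_map ψ (A ⊔ N)) (Subgroup.comap_mono h1)
  have hYB : Y ≤ B ⊔ N := by
    have h3 := Subgroup.comap_mono (f := ψ) h2
    rwa [Subgroup.comap_map_eq, QuotientGroup.ker_mk', sup_assoc, sup_idem] at h3
  haveI : (Y ⊓ B).Normal := Subgroup.normal_inf_normal Y B
  have hZ := C.chief i (Y ⊓ B) inferInstance
    (le_inf (le_trans (le_sup_left : A ≤ A ⊔ N) hAY)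
      ((chiefSeries_strictMono C).monotone (Fin.castSucc_lt_succ (i := i)).le))
    inf_le_right
  have hXY : X = Y.map ψ := (Subgroup.map_comap_eq_self_of_surjective hs X).symm
  rcases hZ with hZA | hZB
  · left
    have hYeq : Y = A ⊔ N := by
      have hDed : Y ⊓ (B ⊔ N) = (Y ⊓ B) ⊔ N := inf_sup_normal_of_le hNY
      rw [inf_eq_left.mpr hYB, hZA] at hDed
      exact hDed
    rw [hXY, hYeq]
  · right
    have hYeq : Y = B ⊔ N := le_antisymm hYB (sup_le (le_trans (le_of_eq hZB.symm) inf_le_left) hNY)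
    rw [hXY, hYeq]

end FieldsLayer

section StepLayer

variable {G : Type*} [Group G] [Finite G] (N : Subgroup G) [N.Normal] (C : ChiefSeries G)

private lemma auxs_step (H : Subgroup G)
    (hcop : Nat.Coprime (Nat.card H) (Nat.card N))
    (hC : ∀ i, PartialPiStep H C i) (j : Fin (auxm N C)) (q : ℕ) (hq : q.Prime)
    (hdvd : q ∣ (Subgroup.normalizer (((H.map (QuotientGroup.mk' N) ⊔ auxs N C j.castSucc)
      ⊓ auxs N C j.succ : Subgroup (G ⧸ N)) : Set (G ⧸ N))).index) :
    q ∣ Nat.card ((H.map (QuotientGroup.mk' N) ⊔ auxs N C j.castSucc)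
      ⊓ auxs N C j.succ : Subgroup (G ⧸ N)) / Nat.card (auxs N C j.castSucc) := by
  rw [auxs_castSucc, auxs_succ, auxF_rep N C _ (auxE_lt N C j).le,
    auxF_rep N C _ (auxE_lt N C j)] at hdvd ⊢
  set i : Fin C.n := ⟨auxE N C j, auxE_lt N C j⟩ with hidef
  have hcs : (⟨auxE N C j, Nat.lt_succ_of_lt (auxE_lt N C j)⟩ : Fin (C.n + 1)) = i.castSucc := rfl
  have hsc : (⟨auxE N C j + 1, Nat.succ_lt_succ (auxE_lt N C j)⟩ : Fin (C.n + 1)) = i.succ := rfl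
  rw [hcs, hsc] at hdvd ⊢
  set A := C.s i.castSucc with hAdef
  set B := C.s i.succ with hBdef
  haveI : A.Normal := C.normal i.castSucc
  haveI : B.Normal := C.normal i.succ
  have hAB : A ≤ B := (chiefSeries_strictMono C).monotone (Fin.castSucc_lt_succ (i := i)).le
  -- the jump: `B ⊓ (A ⊔ N) = A`
  have hjump : ((A ⊔ N).map (QuotientGroup.mk' N)) ≠ ((B ⊔ N).map (QuotientGroup.mk' N)) := by
    have hj := auxE_jump N C j
    rwa [auxF_rep N C _ (auxE_lt N C j).le, auxF_rep N C _ (auxE_lt N C j), hcs, hsc] at hj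
  have hBA : B ⊓ (A ⊔ N) = A := by
    rcases C.chief i (B ⊓ (A ⊔ N)) (Subgroup.normal_inf_normal B (A ⊔ N))
      (le_inf hAB le_sup_left) inf_le_left with h | h
    · exact h
    · exfalso; apply hjump
      have hBle : B ≤ A ⊔ N := le_of_eq_of_le h.symm inf_le_right
      have heq : A ⊔ N = B ⊔ N :=
        le_antisymm (sup_le_sup_right hAB N) (sup_le hBle le_sup_right)
      rw [heq]
  -- coprimality
  have hHA : H ⊓ (A ⊔ N) = H ⊓ A := by rw [sup_comm A N, inf_sup_normal_eq_inf hcop]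
  have hHB : H ⊓ (B ⊔ N) = H ⊓ B := by rw [sup_comm B N, inf_sup_normal_eq_inf hcop]
  -- Dedekind computations
  have hK : (H ⊔ (A ⊔ N)) ⊓ (B ⊔ N) = (H ⊓ B) ⊔ (A ⊔ N) := by
    rw [sup_inf_eq_of_normal (sup_le_sup_right hAB N), hHB]
  have hD : (H ⊔ A) ⊓ B = (H ⊓ B) ⊔ A := sup_inf_eq_of_normal hAB
  set K := (H ⊓ B) ⊔ (A ⊔ N) with hKdef
  set D := (H ⊓ B) ⊔ A with hDdef
  have hKND : K = N ⊔ D := by rw [hKdef, hDdef, ← sup_assoc, sup_comm _ N]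
  have hnormKD : Subgroup.normalizer (D : Set G) ≤ Subgroup.normalizer (K : Set G) := by
    rw [hKND]; exact normalizer_le_sup_normal N D
  have hNTc : N ≤ A ⊔ N := le_sup_right
  have hNTb : N ≤ B ⊔ N := le_sup_right
  have hNHTc : N ≤ H ⊔ (A ⊔ N) := hNTc.trans le_sup_right
  rw [← Subgroup.map_sup, map_inf_map hNHTc hNTb, hK] at hdvd ⊢
  have hNK : N ≤ K := hNTc.trans le_sup_right
  rw [index_normalizer_map hNK] at hdvd
  have hqD : q ∣ (Subgroup.normalizer (D : Set G)).index := hdvd.trans (Subgroup.index_dvd_of_le hnormKD)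
  have hstep := hC i q hq (by rw [hD]; exact hqD)
  rw [hD] at hstep
  -- hstep : q ∣ Nat.card D / Nat.card A
  have hTcK : (A ⊔ N) ≤ K := le_sup_right
  rw [card_map_mk' hNK, card_map_mk' hNTc]
  have hmul : N.relIndex (A ⊔ N) * (A ⊔ N).relIndex K = N.relIndex K :=
    Subgroup.relIndex_mul_relIndex N (A ⊔ N) K hNTc hTcK
  have hpos : 0 < N.relIndex (A ⊔ N) := by
    rw [← card_map_mk' hNTc]; exact Nat.card_pos
  rw [← hmul, Nat.mul_div_cancel_left _ hpos]
  have hrelEq : (A ⊔ N).relIndex K = A.relIndex D := by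
    rw [hKdef, Subgroup.relIndex_sup_right, hDdef, Subgroup.relIndex_sup_right]
    rw [← Subgroup.inf_relIndex_right (A ⊔ N) (H ⊓ B), ← Subgroup.inf_relIndex_right A (H ⊓ B)]
    have hinfeq : (A ⊔ N) ⊓ (H ⊓ B) = A ⊓ (H ⊓ B) := by
      ext x
      simp only [Subgroup.mem_inf]
      constructor
      · rintro ⟨h1, h2, h3⟩
        have hx : x ∈ H ⊓ A := hHA ▸ (show x ∈ H ⊓ (A ⊔ N) from ⟨h2, h1⟩)
        exact ⟨hx.2, h2, h3⟩
      · rintro ⟨h1, h2, h3⟩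
        exact ⟨Subgroup.mem_sup_left h1, h2, h3⟩
    rw [hinfeq]
  rw [hrelEq, ← card_div_card_eq_relindex (le_sup_right : A ≤ D)]
  exact hstep

end StepLayer

theorem statement_1 {G : Type*} [Group G] [Finite G] (H N : Subgroup G) [N.Normal]
    (hcop : Nat.Coprime (Nat.card H) (Nat.card N)) (hH : PartialPi H) :
    PartialPi (H.map (QuotientGroup.mk' N)) := by
  obtain ⟨C, hC⟩ := hH
  refine ⟨⟨auxm N C, auxs N C, auxs_bot N C, auxs_top N C, auxs_normal N C, auxs_strict N C,
    auxs_chief N C⟩, ?_⟩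
  exact fun j => auxs_step N C H hcop hC j
end

section
/- Let p be a prime, G a finite group, H a p-subgroup of G, and N a normal subgroup of G containing H. If H satisfies the partial Π-property in G, then G has a chief series 1 = G₀* < G₁* < ⋯ < G_r* = N < ⋯ < G_n* = G passing through N such that |G : N_G(H G*_{i-1} ∩ G*_i)| is a power of p for every i with 1 ≤ i ≤ n. -/
variable {G : Type*} [Group G]

section AuxPi
variable {G : Type*} [Group G]
lemma modular_inf {X A M : Subgroup G} (hA : A.Normal) (hXM : X ≤ M) :
    (X ⊔ A) ⊓ M = X ⊔ (A ⊓ M) := by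
  haveI := hA
  apply le_antisymm
  · rintro g ⟨hg1, hg2⟩
    have hgm : g ∈ ((X ⊔ A : Subgroup G) : Set G) := hg1
    rw [Subgroup.mul_normal X A] at hgm
    obtain ⟨x, hx, a, ha, rfl⟩ := Set.mem_mul.mp hgm
    exact Subgroup.mul_mem _ (Subgroup.mem_sup_left hx)
      (Subgroup.mem_sup_right ⟨ha, by
        have : x⁻¹ * (x * a) ∈ M := M.mul_mem (M.inv_mem (hXM hx)) hg2
        simpa using this⟩)
  · exact sup_le (le_inf le_sup_left hXM) (le_inf (inf_le_left.trans le_sup_right) inf_le_right)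

lemma modular_inf' {X N B : Subgroup G} (hN : N.Normal) (hNX : N ≤ X) :
    X ⊓ (N ⊔ B) = N ⊔ (X ⊓ B) := by
  haveI := hN
  apply le_antisymm
  · rintro g ⟨hg1, hg2⟩
    have hgm : g ∈ ((N ⊔ B : Subgroup G) : Set G) := hg2
    rw [Subgroup.normal_mul N B] at hgm
    obtain ⟨n, hn, b, hb, rfl⟩ := Set.mem_mul.mp hgm
    exact Subgroup.mul_mem _ (Subgroup.mem_sup_left hn)
      (Subgroup.mem_sup_right ⟨by
        have : n⁻¹ * (n * b) ∈ X := X.mul_mem (X.inv_mem (hNX hn)) hg1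
        simpa using this, hb⟩)
  · exact sup_le (le_inf hNX le_sup_left) (le_inf inf_le_left (inf_le_right.trans le_sup_right))

lemma norm_le_inf {K N : Subgroup G} (hN : N.Normal) :
    Subgroup.normalizer (K : Set G) ≤ Subgroup.normalizer ((K ⊓ N : Subgroup G) : Set G) := by
  intro g hg
  rw [Subgroup.mem_normalizer_iff] at hg ⊢
  intro x
  constructor
  · rintro ⟨h1, h2⟩; exact ⟨(hg x).mp h1, hN.conj_mem x h2 g⟩
  · rintro ⟨h1, h2⟩
    refine ⟨(hg x).mpr h1, ?_⟩
    have := hN.conj_mem _ h2 g⁻¹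
    simpa [mul_assoc] using this

lemma index_pp [Finite G] {p : ℕ} (hp : p.Prime) {H A B : Subgroup G}
    (hHp : IsPGroup p H) (hA : A.Normal) (hAB : A ≤ B)
    (hstep : ∀ q : ℕ, q.Prime → q ∣ (Subgroup.normalizer (((H ⊔ A) ⊓ B : Subgroup G) : Set G)).index →
      q ∣ Nat.card ((H ⊔ A) ⊓ B : Subgroup G) / Nat.card A) :
    ∃ m : ℕ, (Subgroup.normalizer (((H ⊔ A) ⊓ B : Subgroup G) : Set G)).index = p ^ m := by
  haveI : Fact p.Prime := ⟨hp⟩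
  haveI := hA
  set K := (H ⊔ A) ⊓ B with hK
  have hAK : A ≤ K := le_inf le_sup_right hAB
  obtain ⟨a, ha⟩ := hHp.exists_card_eq
  have hcardA : Nat.card (A.subgroupOf K) = Nat.card A :=
    Nat.card_congr (Subgroup.subgroupOfEquivOfLe hAK).toEquiv
  have h1 : Nat.card K / Nat.card A = A.relIndex K := by
    have := Subgroup.card_mul_index (A.subgroupOf K)
    rw [hcardA] at this
    rw [← this, Nat.mul_div_cancel_left _ Nat.card_pos]
    rfl
  have h2 : A.relIndex K ∣ p ^ a := by
    have hd1 : A.relIndex K ∣ A.relIndex (H ⊔ A) :=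
      ⟨K.relIndex (H ⊔ A), (Subgroup.relIndex_mul_relIndex A K (H ⊔ A) hAK inf_le_left).symm⟩
    have hd2 : A.relIndex (H ⊔ A) = A.relIndex H := Subgroup.relIndex_sup_right H A
    have hd3 : A.relIndex H ∣ Nat.card H := Subgroup.index_dvd_card (A.subgroupOf H)
    rw [← ha]
    exact hd1.trans (hd2 ▸ hd3)
  have hn0 : (Subgroup.normalizer (K : Set G)).index ≠ 0 := Subgroup.index_ne_zero_of_finite
  have hq : ∀ {q : ℕ}, q.Prime → q ∣ (Subgroup.normalizer (K : Set G)).index → q = p := by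
    intro q hq hqd
    have := hstep q hq hqd
    rw [h1] at this
    exact (Nat.prime_dvd_prime_iff_eq hq hp).mp (hq.dvd_of_dvd_pow (this.trans h2))
  exact ⟨_, Nat.eq_prime_pow_of_unique_prime_dvd hn0 hq⟩

lemma lower_step [Finite G] {p : ℕ} (hp : p.Prime) {H N A B : Subgroup G}
    (hHp : IsPGroup p H) (hN : N.Normal) (hHN : H ≤ N)
    (hA : A.Normal) (hAB : A ≤ B)
    (hchief : ∀ X : Subgroup G, X.Normal → A ≤ X → X ≤ B → X = A ∨ X = B)
    (hstep : ∀ q : ℕ, q.Prime → q ∣ (Subgroup.normalizer (((H ⊔ A) ⊓ B : Subgroup G) : Set G)).index →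
      q ∣ Nat.card ((H ⊔ A) ⊓ B : Subgroup G) / Nat.card A) :
    (A ⊓ N ≤ B ⊓ N) ∧
    (∀ X : Subgroup G, X.Normal → A ⊓ N ≤ X → X ≤ B ⊓ N → X = A ⊓ N ∨ X = B ⊓ N) ∧
    (∃ e : ℕ, (Subgroup.normalizer (((H ⊔ (A ⊓ N)) ⊓ (B ⊓ N) : Subgroup G) : Set G)).index = p ^ e) := by
  refine ⟨inf_le_inf_right N hAB, ?_, ?_⟩
  · intro X hX hlX hXu
    haveI := hX; haveI := hA
    rcases hchief (X ⊔ A) inferInstance le_sup_right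
        (sup_le (hXu.trans inf_le_left) hAB) with h | h
    · left
      have hXA : X ≤ A := le_sup_left.trans h.le
      exact le_antisymm (le_inf hXA (hXu.trans inf_le_right)) hlX
    · right
      have hmod : (X ⊔ A) ⊓ N = X ⊔ (A ⊓ N) := modular_inf hA (hXu.trans inf_le_right)
      rw [h] at hmod
      exact (hmod.trans (sup_eq_left.mpr hlX)).symm
  · obtain ⟨e, he⟩ := index_pp hp hHp hA hAB hstep
    have hk : (H ⊔ (A ⊓ N)) ⊓ (B ⊓ N) = ((H ⊔ A) ⊓ B) ⊓ N := by
      rw [← modular_inf hA hHN]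
      ext x
      simp only [Subgroup.mem_inf]
      tauto
    rw [hk]
    have hdvd : (Subgroup.normalizer ((((H ⊔ A) ⊓ B) ⊓ N : Subgroup G) : Set G)).index ∣ p ^ e :=
      he ▸ Subgroup.index_dvd_of_le (norm_le_inf hN)
    obtain ⟨k, _, hk2⟩ := (Nat.dvd_prime_pow hp).mp hdvd
    exact ⟨k, hk2⟩

lemma upper_step {p : ℕ} {H N A B : Subgroup G}
    (hN : N.Normal) (hHN : H ≤ N) (hA : A.Normal) (hB : B.Normal) (hAB : A ≤ B)
    (hchief : ∀ X : Subgroup G, X.Normal → A ≤ X → X ≤ B → X = A ∨ X = B) :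
    (N ⊔ A ≤ N ⊔ B) ∧
    (∀ X : Subgroup G, X.Normal → N ⊔ A ≤ X → X ≤ N ⊔ B → X = N ⊔ A ∨ X = N ⊔ B) ∧
    (∃ e : ℕ, (Subgroup.normalizer (((H ⊔ (N ⊔ A)) ⊓ (N ⊔ B) : Subgroup G) : Set G)).index = p ^ e) := by
  have hle : N ⊔ A ≤ N ⊔ B := sup_le_sup_left hAB N
  refine ⟨hle, ?_, ?_⟩
  · intro X hX hlX hXu
    haveI := hX; haveI := hB
    rcases hchief (X ⊓ B) inferInstance
        (le_inf (le_sup_right.trans hlX) hAB) inf_le_right with h | h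
    · left
      have hmod : X ⊓ (N ⊔ B) = N ⊔ (X ⊓ B) := modular_inf' hN (le_sup_left.trans hlX)
      rw [inf_eq_left.mpr hXu, h] at hmod
      exact hmod
    · right
      exact le_antisymm hXu (sup_le (le_sup_left.trans hlX) (inf_eq_right.mp h))
  · have h1 : H ⊔ (N ⊔ A) = N ⊔ A := sup_eq_right.mpr (hHN.trans le_sup_left)
    have h2 : (N ⊔ A) ⊓ (N ⊔ B) = N ⊔ A := inf_eq_left.mpr hle
    haveI := hN; haveI := hA
    refine ⟨0, ?_⟩
    rw [h1, h2, Subgroup.normalizer_eq_top_iff.mpr inferInstance, Subgroup.index_top, pow_zero]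

lemma build_chief (p : ℕ) (H N : Subgroup G) :
    ∀ (m : ℕ) (t : Fin (m + 1) → Subgroup G),
      t 0 = ⊥ → t (Fin.last m) = ⊤ →
      (∀ j, (t j).Normal) →
      (∀ j : Fin m, t j.castSucc ≤ t j.succ) →
      (∀ j : Fin m, ∀ X : Subgroup G, X.Normal → t j.castSucc ≤ X → X ≤ t j.succ →
        X = t j.castSucc ∨ X = t j.succ) →
      (∀ j : Fin m, ∃ k : ℕ, (Subgroup.normalizer (((H ⊔ t j.castSucc) ⊓ t j.succ : Subgroup G) : Set G)).index = p ^ k) →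
      (∃ r, t r = N) →
      ∃ C : ChiefSeries G, (∃ r : Fin (C.n + 1), C.s r = N) ∧
        ∀ i : Fin C.n, ∃ k : ℕ,
          (Subgroup.normalizer (((H ⊔ C.s i.castSucc) ⊓ C.s i.succ : Subgroup G) : Set G)).index = p ^ k := by
  intro m
  induction m with
  | zero =>
    intro t hbot htop hnorm _ _ _ hNr
    exact ⟨⟨0, t, hbot, htop, hnorm, fun i => i.elim0, fun i => i.elim0⟩, hNr,
      fun i => i.elim0⟩
  | succ m ih =>
    intro t hbot htop hnorm hle hchief hcond hNr
    by_cases hdup : ∃ j : Fin (m + 1), t j.castSucc = t j.succ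
    · obtain ⟨j, hj⟩ := hdup
      -- remove index j+1
      set t' : Fin (m + 1) → Subgroup G := fun k =>
        if (k : ℕ) ≤ (j : ℕ) then t ⟨(k : ℕ), by omega⟩ else t ⟨(k : ℕ) + 1, by omega⟩
        with ht'
      have te : ∀ (a b : Fin (m + 2)), (a : ℕ) = (b : ℕ) → t a = t b :=
        fun a b h => congrArg t (Fin.ext h)
      have ht'v : ∀ (k : Fin (m + 1)), (t' k = t ⟨(k : ℕ), by omega⟩ ∧ (k : ℕ) ≤ (j : ℕ)) ∨
          (t' k = t ⟨(k : ℕ) + 1, by omega⟩ ∧ (j : ℕ) < (k : ℕ)) := by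
        intro k
        by_cases h : (k : ℕ) ≤ (j : ℕ)
        · exact Or.inl ⟨by rw [ht']; simp only [h, if_true], h⟩
        · exact Or.inr ⟨by rw [ht']; simp only [h, if_false], by omega⟩
      have key : ∀ k : Fin m, ∃ i : Fin (m + 1),
          t' k.castSucc = t i.castSucc ∧ t' k.succ = t i.succ := by
        intro k
        have hk1 : ((k.castSucc : Fin (m + 1)) : ℕ) = (k : ℕ) := rfl
        have hk2 : ((k.succ : Fin (m + 1)) : ℕ) = (k : ℕ) + 1 := rfl
        by_cases h1 : (k : ℕ) + 1 ≤ (j : ℕ)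
        · refine ⟨⟨(k : ℕ), by omega⟩, ?_, ?_⟩
          · rcases ht'v k.castSucc with ⟨he, _⟩ | ⟨_, hgt⟩
            · rw [he]; exact te _ _ (by simp [hk1])
            · omega
          · rcases ht'v k.succ with ⟨he, _⟩ | ⟨_, hgt⟩
            · rw [he]; exact te _ _ (by simp [hk2])
            · omega
        · by_cases h2 : (k : ℕ) ≤ (j : ℕ)
          · -- k = j
            have hkj : (k : ℕ) = (j : ℕ) := by omega
            refine ⟨⟨(k : ℕ) + 1, by omega⟩, ?_, ?_⟩
            · rcases ht'v k.castSucc with ⟨he, _⟩ | ⟨_, hgt⟩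
              · rw [he]
                have e1 : t ⟨((k.castSucc : Fin (m+1)) : ℕ), by omega⟩ = t j.castSucc :=
                  te _ _ (by simp [hk1, hkj])
                rw [e1, hj]
                exact te _ _ (by simp [hkj])
              · omega
            · rcases ht'v k.succ with ⟨_, hle'⟩ | ⟨he, _⟩
              · omega
              · rw [he]; exact te _ _ (by simp [hk2])
          · refine ⟨⟨(k : ℕ) + 1, by omega⟩, ?_, ?_⟩
            · rcases ht'v k.castSucc with ⟨_, hle'⟩ | ⟨he, _⟩
              · omega
              · rw [he]; exact te _ _ (by simp [hk1])
            · rcases ht'v k.succ with ⟨_, hle'⟩ | ⟨he, _⟩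
              · omega
              · rw [he]; exact te _ _ (by simp [hk2])
      apply ih t'
      · rcases ht'v 0 with ⟨he, _⟩ | ⟨_, hgt⟩
        · rw [he, ← hbot]; exact te _ _ rfl
        · simp at hgt
      · rcases ht'v (Fin.last m) with ⟨he, hle'⟩ | ⟨he, _⟩
        · -- m ≤ j, so j = m
          have hjm : (j : ℕ) = m := by
            have := j.isLt; simp [Fin.last] at hle'; omega
          rw [he]
          have e1 : t ⟨((Fin.last m : Fin (m+1)) : ℕ), by omega⟩ = t j.castSucc :=
            te _ _ (by simp [Fin.last, hjm])
          rw [e1, hj, ← htop]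
          exact te _ _ (by simp [Fin.last, hjm])
        · rw [he, ← htop]
          exact te _ _ (by simp [Fin.last])
      · intro k
        rcases ht'v k with ⟨he, _⟩ | ⟨he, _⟩ <;> rw [he] <;> exact hnorm _
      · intro k; obtain ⟨i, h1, h2⟩ := key k; rw [h1, h2]; exact hle i
      · intro k; obtain ⟨i, h1, h2⟩ := key k; rw [h1, h2]; exact hchief i
      · intro k; obtain ⟨i, h1, h2⟩ := key k; rw [h1, h2]; exact hcond i
      · obtain ⟨r, hr⟩ := hNr
        by_cases hrj : (r : ℕ) ≤ (j : ℕ)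
        · refine ⟨⟨(r : ℕ), by omega⟩, ?_⟩
          rcases ht'v ⟨(r : ℕ), by omega⟩ with ⟨he, _⟩ | ⟨_, hgt⟩
          · rw [he, ← hr]
          · simp at hgt; omega
        · by_cases hrj1 : (r : ℕ) = (j : ℕ) + 1
          · refine ⟨⟨(j : ℕ), by omega⟩, ?_⟩
            rcases ht'v ⟨(j : ℕ), by omega⟩ with ⟨he, _⟩ | ⟨_, hgt⟩
            · rw [he]
              have e1 : t ⟨(j : ℕ), by omega⟩ = t j.castSucc := te _ _ (by simp)
              rw [e1, hj, ← hr]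
              exact te _ _ (by simp [hrj1])
            · simp at hgt
          · refine ⟨⟨(r : ℕ) - 1, by omega⟩, ?_⟩
            rcases ht'v ⟨(r : ℕ) - 1, by omega⟩ with ⟨_, hle'⟩ | ⟨he, _⟩
            · simp at hle'; omega
            · rw [he, ← hr]; exact te _ _ (by simp; omega)
    · push_neg at hdup
      refine ⟨⟨m + 1, t, hbot, htop, hnorm,
        fun i => lt_of_le_of_ne (hle i) (hdup i), hchief⟩, hNr, hcond⟩

end AuxPi


theorem statement_2 {G : Type*} [Group G] [Finite G] {p : ℕ} (hp : p.Prime)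
    (H N : Subgroup G) (hHp : IsPGroup p H) (hN : N.Normal) (hHN : H ≤ N)
    (hPi : PartialPi H) :
    ∃ C : ChiefSeries G, (∃ r : Fin (C.n + 1), C.s r = N) ∧
      ∀ i : Fin C.n, ∃ m : ℕ,
        (Subgroup.normalizer (((H ⊔ C.s i.castSucc) ⊓ C.s i.succ : Subgroup G) : Set G)).index = p ^ m := by
  obtain ⟨C, hC⟩ := hPi
  rcases Nat.eq_zero_or_pos C.n with hn0 | hn1
  · -- trivial group: C itself works, N = ⊥ = C.s 0
    refine ⟨C, ⟨0, ?_⟩, fun i => by rw [hn0] at i; exact i.elim0⟩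
    have htop : C.s (Fin.last C.n) = ⊤ := C.top_eq
    have hlast : (Fin.last C.n : Fin (C.n + 1)) = 0 := by
      apply Fin.ext; simp [hn0]
    rw [hlast] at htop
    rw [C.bot_eq]
    have : N ≤ ⊥ := by rw [← C.bot_eq, ← hlast, C.top_eq]; exact le_top
    exact (le_bot_iff.mp this).symm
  · set n := C.n with hn
    have se : ∀ a b : Fin (n + 1), (a : ℕ) = (b : ℕ) → C.s a = C.s b :=
      fun a b h => congrArg C.s (Fin.ext h)
    set t : Fin (n + n + 1) → Subgroup G := fun j =>
      if h : (j : ℕ) ≤ n then C.s ⟨(j : ℕ), by omega⟩ ⊓ N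
      else N ⊔ C.s ⟨(j : ℕ) - n, by omega⟩ with ht
    have htv : ∀ j : Fin (n + n + 1),
        (∃ hj : (j : ℕ) ≤ n, t j = C.s ⟨(j : ℕ), by omega⟩ ⊓ N) ∨
        (n < (j : ℕ) ∧ t j = N ⊔ C.s ⟨(j : ℕ) - n, by omega⟩) := by
      intro j
      by_cases h : (j : ℕ) ≤ n
      · exact Or.inl ⟨h, by rw [ht]; simp only [h, dif_pos]⟩
      · exact Or.inr ⟨by omega, by rw [ht]; simp only [h, dif_neg, not_false_iff]⟩
    have step : ∀ k : Fin (n + n),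
        (t k.castSucc ≤ t k.succ) ∧
        (∀ X : Subgroup G, X.Normal → t k.castSucc ≤ X → X ≤ t k.succ →
          X = t k.castSucc ∨ X = t k.succ) ∧
        (∃ e : ℕ, (Subgroup.normalizer (((H ⊔ t k.castSucc) ⊓ t k.succ : Subgroup G) : Set G)).index = p ^ e) := by
      intro k
      have hc1 : ((k.castSucc : Fin (n + n + 1)) : ℕ) = (k : ℕ) := rfl
      have hc2 : ((k.succ : Fin (n + n + 1)) : ℕ) = (k : ℕ) + 1 := rfl
      by_cases h1 : (k : ℕ) + 1 ≤ n
      · -- lower part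
        set i : Fin n := ⟨(k : ℕ), by omega⟩ with hi
        have e1 : t k.castSucc = C.s i.castSucc ⊓ N := by
          rcases htv k.castSucc with ⟨_, he⟩ | ⟨hgt, _⟩
          · rw [he]; rw [se _ i.castSucc (by simp [hc1, hi])]
          · omega
        have e2 : t k.succ = C.s i.succ ⊓ N := by
          rcases htv k.succ with ⟨_, he⟩ | ⟨hgt, _⟩
          · rw [he]; rw [se _ i.succ (by simp [hc2, hi])]
          · omega
        rw [e1, e2]
        exact lower_step hp hHp hN hHN (C.normal _) (C.strict i).le (C.chief i) (hC i)
      · by_cases h2 : (k : ℕ) ≤ n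
        · -- middle step: k = n
          have hkn : (k : ℕ) = n := by omega
          set i : Fin n := ⟨0, by omega⟩ with hi
          have e1 : t k.castSucc = N ⊔ C.s i.castSucc := by
            rcases htv k.castSucc with ⟨_, he⟩ | ⟨hgt, _⟩
            · rw [he]
              rw [se _ (Fin.last n) (by simp [hc1, hkn, Fin.last]), C.top_eq, top_inf_eq]
              rw [se i.castSucc 0 (by simp [hi]), C.bot_eq, sup_bot_eq]
            · omega
          have e2 : t k.succ = N ⊔ C.s i.succ := by
            rcases htv k.succ with ⟨hle', _⟩ | ⟨_, he⟩
            · omega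
            · rw [he]; rw [se _ i.succ (by simp [hc2, hkn, hi])]
          rw [e1, e2]
          exact upper_step hN hHN (C.normal _) (C.normal _) (C.strict i).le (C.chief i)
        · -- upper part
          set i : Fin n := ⟨(k : ℕ) - n, by omega⟩ with hi
          have e1 : t k.castSucc = N ⊔ C.s i.castSucc := by
            rcases htv k.castSucc with ⟨hle', _⟩ | ⟨_, he⟩
            · omega
            · rw [he]; rw [se _ i.castSucc (by simp [hc1, hi])]
          have e2 : t k.succ = N ⊔ C.s i.succ := by
            rcases htv k.succ with ⟨hle', _⟩ | ⟨_, he⟩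
            · omega
            · rw [he]; rw [se _ i.succ (by simp [hc2, hi]; omega)]
          rw [e1, e2]
          exact upper_step hN hHN (C.normal _) (C.normal _) (C.strict i).le (C.chief i)
    apply build_chief p H N (n + n) t
    · rcases htv 0 with ⟨_, he⟩ | ⟨hgt, _⟩
      · rw [he, se _ 0 (by simp), C.bot_eq, bot_inf_eq]
      · simp at hgt
    · rcases htv (Fin.last (n + n)) with ⟨hle', _⟩ | ⟨_, he⟩
      · simp [Fin.last] at hle'; omega
      · rw [he, se _ (Fin.last n) (by simp [Fin.last]), C.top_eq, sup_top_eq]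
    · intro j
      rcases htv j with ⟨_, he⟩ | ⟨_, he⟩ <;> rw [he]
      · haveI := C.normal (⟨(j : ℕ), by omega⟩ : Fin (n + 1)); infer_instance
      · haveI := C.normal (⟨(j : ℕ) - n, by omega⟩ : Fin (n + 1)); infer_instance
    · exact fun k => (step k).1
    · exact fun k => (step k).2.1
    · exact fun k => (step k).2.2
    · refine ⟨⟨n, by omega⟩, ?_⟩
      rcases htv ⟨n, by omega⟩ with ⟨_, he⟩ | ⟨hgt, _⟩
      · rw [he, se _ (Fin.last n) (by simp [Fin.last]), C.top_eq, top_inf_eq]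
      · simp at hgt
end

section
/- Let p be a prime, G a finite group with Sylow p-subgroup P, and d a power of p with 1 < d < |P|. If every subgroup of P of order d satisfies the partial Π-property in G, then every minimal normal subgroup of G is either a p'-group or a p-group of order at most d. -/
variable {G : Type*} [Group G]

section PartialPiHelpers

open scoped Pointwise

variable {G' : Type*} [Group G']

private lemma ppi_card_div_eq_relindex [Finite G'] {A L : Subgroup G'} (h : A ≤ L) :
    Nat.card L / Nat.card A = A.relIndex L := by
  have h2 : Nat.card (A.subgroupOf L) = Nat.card A :=
    Nat.card_congr (Subgroup.subgroupOfEquivOfLe h).toEquiv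
  have h1 : Nat.card L = Nat.card A * A.relIndex L := by
    rw [← h2]
    exact (Subgroup.card_mul_index (A.subgroupOf L)).symm
  rw [h1, Nat.mul_div_cancel_left _ Nat.card_pos]

private lemma ppi_relindex_sup_dvd [Finite G'] (X A : Subgroup G') [A.Normal] :
    A.relIndex (X ⊔ A) ∣ Nat.card X := by
  have e := (QuotientGroup.quotientInfEquivProdNormalQuotient X A).toEquiv
  have h : A.relIndex (X ⊔ A) = (A.subgroupOf X).index := by
    show (A.subgroupOf (X ⊔ A)).index = (A.subgroupOf X).index
    rw [Subgroup.index_eq_card, Subgroup.index_eq_card]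
    exact (Nat.card_congr e).symm
  rw [h]
  exact Subgroup.index_dvd_card _

private lemma ppi_card_eq_relindex_sup [Finite G'] {X A : Subgroup G'} [A.Normal]
    (h : X ⊓ A = ⊥) : Nat.card X = A.relIndex (X ⊔ A) := by
  have hbot : A.subgroupOf X = ⊥ := by
    ext x
    simp only [Subgroup.mem_subgroupOf, Subgroup.mem_bot]
    constructor
    · intro hx
      have hx2 : (x : G') ∈ X ⊓ A := ⟨x.2, hx⟩
      rw [h, Subgroup.mem_bot] at hx2
      exact Subtype.ext (by simpa using hx2)
    · rintro rfl
      exact A.one_mem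
  have e := (QuotientGroup.quotientInfEquivProdNormalQuotient X A).toEquiv
  rw [hbot] at e
  have h2 : Nat.card X = Nat.card (↥X ⧸ (⊥ : Subgroup ↥X)) :=
    Nat.card_congr (QuotientGroup.quotientBot (G := ↥X)).toEquiv.symm
  show Nat.card X = (A.subgroupOf (X ⊔ A)).index
  rw [Subgroup.index_eq_card, h2]
  exact Nat.card_congr e

private lemma ppi_exists_jump (C : ChiefSeries G') {N : Subgroup G'} (hN : N ≠ ⊥) :
    ∃ i : Fin C.n, N ⊓ C.s i.castSucc = ⊥ ∧ N ⊓ C.s i.succ ≠ ⊥ := by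
  by_contra hcon
  push_neg at hcon
  have hall : ∀ j : Fin (C.n + 1), N ⊓ C.s j = ⊥ := by
    intro j
    induction j using Fin.induction with
    | zero => rw [C.bot_eq, inf_bot_eq]
    | succ i ih => exact hcon i ih
  have h := hall (Fin.last C.n)
  rw [C.top_eq, inf_top_eq] at h
  exact hN h

private lemma ppi_normal_inf {A B : Subgroup G'} (h1 : A.Normal) (h2 : B.Normal) :
    (A ⊓ B).Normal :=
  ⟨fun x hx g => ⟨h1.conj_mem x hx.1 g, h2.conj_mem x hx.2 g⟩⟩

private lemma ppi_normalizer_le_inf {L N : Subgroup G'} (hN : N.Normal) :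
    (Subgroup.normalizer (L : Set G')) ≤ (Subgroup.normalizer ((L ⊓ N : Subgroup G') : Set G')) := by
  intro g hg
  rw [Subgroup.mem_normalizer_iff] at hg ⊢
  intro x
  simp only [Subgroup.mem_inf]
  constructor
  · rintro ⟨h1, h2⟩
    exact ⟨(hg x).mp h1, hN.conj_mem x h2 g⟩
  · rintro ⟨h1, h2⟩
    refine ⟨(hg x).mpr h1, ?_⟩
    have h3 := hN.conj_mem _ h2 g⁻¹
    have e : g⁻¹ * (g * x * g⁻¹) * g⁻¹⁻¹ = x := by group
    rwa [e] at h3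

private lemma ppi_le_normalizer_inf {Pg N : Subgroup G'} (hN : N.Normal) :
    Pg ≤ (Subgroup.normalizer ((Pg ⊓ N : Subgroup G') : Set G')) := by
  intro g hg
  rw [Subgroup.mem_normalizer_iff]
  intro x
  simp only [Subgroup.mem_inf]
  constructor
  · rintro ⟨h1, h2⟩
    exact ⟨Pg.mul_mem (Pg.mul_mem hg h1) (Pg.inv_mem hg), hN.conj_mem x h2 g⟩
  · rintro ⟨h1, h2⟩
    have e : g⁻¹ * (g * x * g⁻¹) * g⁻¹⁻¹ = x := by group
    constructor
    · have := Pg.mul_mem (Pg.mul_mem (Pg.inv_mem hg) h1) (Pg.inv_mem (Pg.inv_mem hg))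
      rwa [e] at this
    · have := hN.conj_mem _ h2 g⁻¹
      rwa [e] at this

private lemma ppi_map_subtype_normalizer {Pg : Subgroup G'} {Hs : Subgroup ↥Pg}
    (hn : Hs.Normal) : Pg ≤ (Subgroup.normalizer ((Hs.map Pg.subtype) : Set G')) := by
  intro g hg
  rw [Subgroup.mem_normalizer_iff]
  intro x
  simp only [Subgroup.mem_map]
  constructor
  · rintro ⟨y, hy, rfl⟩
    refine ⟨⟨g, hg⟩ * y * ⟨g, hg⟩⁻¹, hn.conj_mem y hy ⟨g, hg⟩, ?_⟩
    simp [Subgroup.coe_subtype]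
  · rintro ⟨y, hy, hxy⟩
    refine ⟨⟨g, hg⟩⁻¹ * y * ⟨g, hg⟩, ?_, ?_⟩
    · have h2 := hn.conj_mem y hy ⟨g, hg⟩⁻¹
      simpa using h2
    · have h3 : Pg.subtype (⟨g, hg⟩⁻¹ * y * ⟨g, hg⟩) = g⁻¹ * (Pg.subtype y) * g := by
        simp [Subgroup.coe_subtype]
      rw [h3, hxy]
      group

private lemma ppi_core_normal [Finite G'] {p : ℕ} {Pg K L : Subgroup G'}
    (hPle : Pg ≤ (Subgroup.normalizer (K : Set G'))) (hNL : (Subgroup.normalizer (L : Set G')) ≤ (Subgroup.normalizer (K : Set G')))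
    (hPind : ¬ p ∣ Pg.index)
    (hq : ∀ q : ℕ, q.Prime → q ∣ (Subgroup.normalizer (L : Set G')).index → q = p) :
    K.Normal := by
  rw [← Subgroup.normalizer_eq_top_iff, ← Subgroup.index_eq_one]
  by_contra hne
  obtain ⟨q, hqp, hqd⟩ := Nat.exists_prime_and_dvd hne
  have h1 : q ∣ (Subgroup.normalizer (L : Set G')).index := hqd.trans (Subgroup.index_dvd_of_le hNL)
  have h2 := hq q hqp h1
  subst h2
  exact hPind (hqd.trans (Subgroup.index_dvd_of_le hPle))

private lemma ppi_dedekind {H A N : Subgroup G'} [A.Normal] (hHN : H ≤ N)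
    (hNA : N ⊓ A = ⊥) : N ⊓ (H ⊔ A) ≤ H := by
  intro x hx
  obtain ⟨hxN, hxHA⟩ := hx
  have hmul : (x : G') ∈ (H : Set G') * (A : Set G') := by
    rw [← Subgroup.mul_normal H A]
    exact hxHA
  rw [Set.mem_mul] at hmul
  obtain ⟨h, hh, c, hc, hhc⟩ := hmul
  have haN : c ∈ N := by
    have e : c = h⁻¹ * (h * c) := by group
    rw [e, hhc]
    exact N.mul_mem (N.inv_mem (hHN hh)) hxN
  have hcbot : c ∈ N ⊓ A := ⟨haN, hc⟩
  rw [hNA, Subgroup.mem_bot] at hcbot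
  rw [← hhc, hcbot, mul_one]
  exact hh

private lemma ppi_card_comap {P' : Type*} [Group P'] [Finite P'] (H : Subgroup P') [H.Normal]
    (S : Subgroup (P' ⧸ H)) :
    Nat.card (S.comap (QuotientGroup.mk' H)) = Nat.card S * Nat.card H := by
  set T := S.comap (QuotientGroup.mk' H) with hT
  have hker : H ≤ T := by
    intro x hx
    show QuotientGroup.mk' H x ∈ S
    have hx1 : QuotientGroup.mk' H x = 1 := by
      rw [← MonoidHom.mem_ker, QuotientGroup.ker_mk']
      exact hx
    rw [hx1]
    exact S.one_mem
  set φ : ↥T →* P' ⧸ H := (QuotientGroup.mk' H).comp T.subtype with hφ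
  have hrange : φ.range = S := by
    apply le_antisymm
    · rintro _ ⟨x, rfl⟩
      exact x.2
    · intro y hy
      obtain ⟨x, rfl⟩ := QuotientGroup.mk'_surjective H y
      exact ⟨⟨x, hy⟩, rfl⟩
  have hkerφ : φ.ker = H.subgroupOf T := by
    ext x
    show φ x = 1 ↔ (x : P') ∈ H
    have hφx : φ x = QuotientGroup.mk' H (x : P') := rfl
    rw [hφx]
    constructor
    · intro hxx
      have : (x : P') ∈ (QuotientGroup.mk' H).ker := hxx
      rwa [QuotientGroup.ker_mk'] at this
    · intro hxx
      have : (x : P') ∈ (QuotientGroup.mk' H).ker := by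
        rw [QuotientGroup.ker_mk']
        exact hxx
      exact this
  have h1 : Nat.card φ.ker * φ.ker.index = Nat.card T := Subgroup.card_mul_index _
  rw [Subgroup.index_ker, hrange, hkerφ,
    Nat.card_congr (Subgroup.subgroupOfEquivOfLe hker).toEquiv] at h1
  rw [← h1, mul_comm]

private lemma ppi_exists_central {Q : Type*} [Group Q] [Finite Q] {p : ℕ} [hfp : Fact p.Prime]
    (hQ : IsPGroup p Q) (M : Subgroup Q) (hM : M.Normal) (hdvd : p ∣ Nat.card M) :
    ∃ z : Q, z ∈ M ∧ (∀ w : Q, w * z = z * w) ∧ z ≠ 1 ∧ z ^ p = 1 := by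
  have hconj : IsPGroup p (ConjAct Q) := hQ.of_equiv ConjAct.toConjAct
  have h1fix : (1 : M) ∈ MulAction.fixedPoints (ConjAct Q) M := fun g => smul_one g
  obtain ⟨b, hbfix, hb1⟩ :=
    hconj.exists_fixed_point_of_prime_dvd_card_of_fixed_point (α := ↥M) hdvd h1fix
  have hbne : (b : Q) ≠ 1 := by
    intro h
    exact hb1 (Subtype.ext (by simp [h])).symm
  have hbcomm : ∀ w : Q, w * (b : Q) = (b : Q) * w := by
    intro w
    have h := hbfix (ConjAct.toConjAct w)
    have h2 := congrArg (fun z : ↥M => (z : Q)) h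
    simp only [ConjAct.Subgroup.val_conj_smul, ConjAct.toConjAct_smul] at h2
    calc w * (b : Q) = (w * b * w⁻¹) * w := by group
    _ = (b : Q) * w := by rw [h2]
  obtain ⟨k, hk⟩ := hQ (b : Q)
  have hord : orderOf (b : Q) ∣ p ^ k := orderOf_dvd_of_pow_eq_one hk
  obtain ⟨m, hmk, hm⟩ := (Nat.dvd_prime_pow hfp.out).mp hord
  have hm0 : m ≠ 0 := by
    intro h
    rw [h, pow_zero] at hm
    exact hbne (orderOf_eq_one_iff.mp hm)
  refine ⟨(b : Q) ^ (p ^ (m - 1)), M.pow_mem b.2 _, ?_, ?_, ?_⟩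
  · intro w
    exact Commute.pow_right (hbcomm w) (p ^ (m - 1))
  · intro h
    have hdv : orderOf (b : Q) ∣ p ^ (m - 1) := orderOf_dvd_of_pow_eq_one h
    rw [hm] at hdv
    have hle := (Nat.pow_dvd_pow_iff_le_right hfp.out.one_lt).mp hdv
    omega
  · rw [← pow_mul, ← pow_succ, Nat.sub_add_cancel (Nat.one_le_iff_ne_zero.mpr hm0), ← hm]
    exact pow_orderOf_eq_one _

private lemma ppi_exists_normal_subgroup {P' : Type*} [Group P'] [Finite P'] {p : ℕ}
    [hfp : Fact p.Prime] (hP : IsPGroup p P') (M : Subgroup P') (hM : M.Normal) :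
    ∀ a : ℕ, p ^ a ∣ Nat.card M → ∃ H : Subgroup P', H ≤ M ∧ H.Normal ∧ Nat.card H = p ^ a := by
  intro a
  induction a with
  | zero =>
    intro _
    exact ⟨⊥, bot_le, inferInstance, by simp [Subgroup.card_bot]⟩
  | succ a ih =>
    intro hdvd
    obtain ⟨H, hHM, hHnorm, hHcard⟩ := ih ((pow_dvd_pow p (Nat.le_succ a)).trans hdvd)
    haveI := hHnorm
    set π := QuotientGroup.mk' H with hπ
    set M' := M.map π with hM'def
    haveI hM'n : M'.Normal := Subgroup.Normal.map hM π (QuotientGroup.mk'_surjective H)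
    have hcomap : M'.comap π = M := by
      rw [hM'def, Subgroup.comap_map_eq, QuotientGroup.ker_mk', sup_eq_left.mpr hHM]
    have hcard : Nat.card M' * Nat.card H = Nat.card M := by
      have h := ppi_card_comap H M'
      rw [hcomap] at h
      exact h.symm
    have hpM' : p ∣ Nat.card M' := by
      have h2 : p * p ^ a ∣ Nat.card M' * p ^ a := by
        have : p ^ (a + 1) ∣ Nat.card M' * p ^ a := by
          rw [← hHcard, hcard]
          exact hdvd
        rwa [pow_succ, mul_comm (p ^ a) p] at this
      exact (mul_dvd_mul_iff_right (pow_ne_zero a hfp.out.ne_zero)).mp h2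
    have hQp : IsPGroup p (P' ⧸ H) := hP.to_quotient H
    obtain ⟨z, hzM', hzc, hz1, hzp⟩ := ppi_exists_central hQp M' hM'n hpM'
    have hK'M' : Subgroup.zpowers z ≤ M' := Subgroup.zpowers_le.mpr hzM'
    have hK'n : (Subgroup.zpowers z).Normal := by
      constructor
      intro x hx g
      obtain ⟨n, rfl⟩ := Subgroup.mem_zpowers_iff.mp hx
      have hcom : Commute g z := hzc g
      have hcz : g * z ^ n * g⁻¹ = z ^ n := by
        rw [show g * z ^ n = z ^ n * g from hcom.zpow_right n, mul_inv_cancel_right]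
      rw [hcz]
      exact hx
    have hzord : orderOf z = p := orderOf_eq_prime hzp hz1
    have hK'card : Nat.card (Subgroup.zpowers z) = p := by
      rw [Nat.card_zpowers, hzord]
    refine ⟨(Subgroup.zpowers z).comap π, ?_, hK'n.comap π, ?_⟩
    · calc (Subgroup.zpowers z).comap π ≤ M'.comap π := Subgroup.comap_mono hK'M'
      _ = M := hcomap
    · rw [ppi_card_comap H (Subgroup.zpowers z), hK'card, hHcard, pow_succ, mul_comm]

end PartialPiHelpers

theorem statement_3 {G : Type*} [Group G] [Finite G] {p : ℕ} (hp : p.Prime)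
    (P : Sylow p G) (d : ℕ) (hdpow : ∃ a : ℕ, d = p ^ a)
    (hd1 : 1 < d) (hd2 : d < Nat.card (P : Subgroup G))
    (hPi : ∀ H : Subgroup G, H ≤ P → Nat.card H = d → PartialPi H)
    (N : Subgroup G) (hN : IsMinNormal N) :
    ¬ p ∣ Nat.card N ∨ (IsPGroup p N ∧ Nat.card N ≤ d) := by
  classical
  haveI : Fact p.Prime := ⟨hp⟩
  haveI : Finite (Subgroup G) :=
    Finite.of_injective (fun H : Subgroup G => (H : Set G)) SetLike.coe_injective
  haveI : Finite (Sylow p G) :=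
    Finite.of_injective (fun Q : Sylow p G => (Q : Subgroup G)) (fun a b h => Sylow.ext h)
  obtain ⟨a, hda⟩ := hdpow
  by_cases hpN : p ∣ Nat.card N
  swap
  · exact Or.inl hpN
  right
  obtain ⟨hNnorm, hNbot, hNmin⟩ := hN
  haveI := hNnorm
  set Pg : Subgroup G := (P : Subgroup G) with hPgdef
  set Np : Subgroup G := Pg ⊓ N with hNpdef
  have hNpN : Np ≤ N := inf_le_right
  have hNpP : Np ≤ Pg := inf_le_left
  -- `Np` contains a Sylow `p`-subgroup of `N` (up to conjugacy), so `p ∤ |N : Np|`.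
  obtain ⟨Q⟩ := (Sylow.nonempty : Nonempty (Sylow p ↥N))
  have hQ' : IsPGroup p ((Q : Subgroup ↥N).map N.subtype) := Q.isPGroup'.map N.subtype
  obtain ⟨P₂, hP₂⟩ := hQ'.exists_le_sylow
  obtain ⟨g, hg⟩ := MulAction.exists_smul_eq G P₂ P
  have hconjQ : ∀ x ∈ (Q : Subgroup ↥N).map N.subtype, g * x * g⁻¹ ∈ Np := by
    intro x hx
    have hx2 : x ∈ (P₂ : Subgroup G) := hP₂ hx
    have hxN : x ∈ N := Subgroup.map_subtype_le _ hx
    constructor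
    · have hset : (g * x * g⁻¹) ∈ ((g • P₂ : Sylow p G) : Set G) := by
        rw [Sylow.coe_smul]
        refine Set.mem_smul_set.mpr ⟨x, hx2, ?_⟩
        simp [MulAut.smul_def]
      rw [hg] at hset
      exact hset
    · exact hNnorm.conj_mem x hxN g
  set T : Subgroup G :=
    ((Q : Subgroup ↥N).map N.subtype).map (MulAut.conj g).toMonoidHom with hTdef
  have hTNp : T ≤ Np := by
    intro x hx
    rw [hTdef, Subgroup.mem_map] at hx
    obtain ⟨y, hy, rfl⟩ := hx
    simpa using hconjQ y hy
  have hcardT : Nat.card T = Nat.card (Q : Subgroup ↥N) := by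
    have e1 := Subgroup.equivMapOfInjective ((Q : Subgroup ↥N).map N.subtype)
      (MulAut.conj g).toMonoidHom (MulAut.conj g).injective
    have e2 := Subgroup.equivMapOfInjective (Q : Subgroup ↥N) N.subtype N.subtype_injective
    rw [← Nat.card_congr e1.toEquiv, ← Nat.card_congr e2.toEquiv]
  have hQdvd : Nat.card (Q : Subgroup ↥N) ∣ Nat.card Np :=
    hcardT ▸ Subgroup.card_dvd_of_le hTNp
  have hQind : ¬ p ∣ (Q : Subgroup ↥N).index := Q.not_dvd_index
  have hQmul : Nat.card (Q : Subgroup ↥N) * (Q : Subgroup ↥N).index = Nat.card N :=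
    Subgroup.card_mul_index _
  have hNpmul : Nat.card Np * Np.relIndex N = Nat.card N := by
    have h1 := Subgroup.card_mul_index (Np.subgroupOf N)
    rwa [Nat.card_congr (Subgroup.subgroupOfEquivOfLe hNpN).toEquiv] at h1
  have hprel : ¬ p ∣ Np.relIndex N := by
    intro hpr
    apply hQind
    obtain ⟨t, ht⟩ := hQdvd
    have hcardQpos : 0 < Nat.card (Q : Subgroup ↥N) := Nat.card_pos
    have heq : Nat.card (Q : Subgroup ↥N) * (Q : Subgroup ↥N).index =
        Nat.card (Q : Subgroup ↥N) * (t * Np.relIndex N) := by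
      rw [hQmul, ← hNpmul, ht]
      ring
    have hind : (Q : Subgroup ↥N).index = t * Np.relIndex N :=
      Nat.eq_of_mul_eq_mul_left hcardQpos heq
    rw [hind]
    exact Dvd.dvd.mul_left hpr t
  have hpNp : p ∣ Nat.card Np := by
    rcases hp.dvd_mul.mp (show p ∣ Nat.card Np * Np.relIndex N by rw [hNpmul]; exact hpN) with
      h | h
    · exact h
    · exact absurd h hprel
  have hNpbot : Np ≠ ⊥ := by
    intro h
    rw [h, Subgroup.card_bot] at hpNp
    exact hp.one_lt.ne' (Nat.dvd_one.mp hpNp)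
  have hNpPgroup : IsPGroup p Np := P.isPGroup'.to_le hNpP
  obtain ⟨c, hc⟩ := IsPGroup.iff_card.mp hNpPgroup
  have hPind : ¬ p ∣ Pg.index := P.not_dvd_index
  by_cases hcd : Nat.card Np ≤ d
  · -- Case B : `|Np| ≤ d`.  Choose `Np ≤ H ≤ P` with `|H| = d`.
    obtain ⟨b, hb⟩ := IsPGroup.iff_card.mp P.isPGroup'
    have hab : a ≤ b := by
      have h2 : p ^ a < p ^ b := by rw [← hda, ← hb]; exact hd2
      exact le_of_lt ((Nat.pow_lt_pow_iff_right hp.one_lt).mp h2)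
    have hca : c ≤ a := by
      have h2 : p ^ c ≤ p ^ a := by rw [← hc, ← hda]; exact hcd
      exact (Nat.pow_le_pow_iff_right hp.one_lt).mp h2
    have hdvdP : p ^ a ∣ Nat.card ↥Pg := by
      rw [hb]
      exact pow_dvd_pow p hab
    have hcardsub : Nat.card (Np.subgroupOf Pg) = p ^ c := by
      rw [Nat.card_congr (Subgroup.subgroupOfEquivOfLe hNpP).toEquiv, hc]
    obtain ⟨Ks, hKscard, hKsle⟩ :=
      Sylow.exists_subgroup_card_pow_prime_le p hdvdP (Np.subgroupOf Pg) hcardsub hca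
    set H := Ks.map Pg.subtype with hHdef
    have hHle : H ≤ Pg := Subgroup.map_subtype_le Ks
    have hHcard : Nat.card H = d := by
      rw [hda, ← hKscard]
      exact (Nat.card_congr
        (Subgroup.equivMapOfInjective Ks Pg.subtype Pg.subtype_injective).toEquiv).symm
    have hNpH : Np ≤ H := by
      have h1 : (Np.subgroupOf Pg).map Pg.subtype ≤ H := Subgroup.map_mono hKsle
      rw [Subgroup.subgroupOf_map_subtype] at h1
      exact le_trans (le_inf le_rfl hNpP) h1
    obtain ⟨C, hstep⟩ := hPi H hHle hHcard
    obtain ⟨i, hiA, hiB⟩ := ppi_exists_jump C hNbot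
    set A := C.s i.castSucc with hAdef
    set B := C.s i.succ with hBdef
    haveI hAn : A.Normal := C.normal _
    haveI hBn : B.Normal := C.normal _
    have hNB : N ≤ B := by
      rcases hNmin (N ⊓ B) (ppi_normal_inf hNnorm hBn) inf_le_left with h | h
      · exact absurd h hiB
      · exact inf_eq_left.mp h
    have hAB : A ≤ B := le_of_lt (C.strict i)
    set L := (H ⊔ A) ⊓ B with hLdef
    have hAL : A ≤ L := le_inf le_sup_right hAB
    have hreldvd : A.relIndex L ∣ d := by
      have h1 : A.relIndex L ∣ A.relIndex (H ⊔ A) :=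
        ⟨L.relIndex (H ⊔ A), (Subgroup.relIndex_mul_relIndex A L (H ⊔ A) hAL inf_le_left).symm⟩
      refine h1.trans ?_
      rw [← hHcard]
      exact ppi_relindex_sup_dvd H A
    have hq : ∀ q : ℕ, q.Prime → q ∣ (Subgroup.normalizer (L : Set G)).index → q = p := by
      intro q hq1 hq2
      have h3 := hstep i q hq1 hq2
      rw [ppi_card_div_eq_relindex hAL] at h3
      have h4 : q ∣ d := h3.trans hreldvd
      rw [hda] at h4
      exact (Nat.prime_dvd_prime_iff_eq hq1 hp).mp (hq1.dvd_of_dvd_pow h4)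
    set K := L ⊓ N with hKdef
    have hNpK : Np ≤ K := le_inf (le_inf (hNpH.trans le_sup_left) (hNpN.trans hNB)) hNpN
    have hKN : K ≤ N := inf_le_right
    have hKA : K ⊓ A = ⊥ := le_bot_iff.mp (hiA ▸ inf_le_inf_right A hKN)
    have hKcard : Nat.card K ∣ d := by
      have h1 : Nat.card K = A.relIndex (K ⊔ A) := ppi_card_eq_relindex_sup hKA
      have h2 : A.relIndex (K ⊔ A) ∣ A.relIndex L :=
        ⟨_, (Subgroup.relIndex_mul_relIndex A (K ⊔ A) L le_sup_right (sup_le inf_le_left hAL)).symm⟩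
      rw [h1]
      exact h2.trans hreldvd
    have hKNp : K = Np := by
      have h1 : Np.relIndex K ∣ d := (Subgroup.index_dvd_card (Np.subgroupOf K)).trans hKcard
      have h2 : Np.relIndex K ∣ Np.relIndex N :=
        ⟨_, (Subgroup.relIndex_mul_relIndex Np K N hNpK hKN).symm⟩
      have h3 : ¬ p ∣ Np.relIndex K := fun hh => hprel (hh.trans h2)
      have h4 : Np.relIndex K = 1 := by
        rw [hda] at h1
        obtain ⟨j, hj, hjeq⟩ := (Nat.dvd_prime_pow hp).mp h1
        cases j with
        | zero => rw [hjeq, pow_zero]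
        | succ j => exact absurd (hjeq ▸ dvd_pow_self p (Nat.succ_ne_zero j)) h3
      exact le_antisymm (Subgroup.relIndex_eq_one.mp h4) hNpK
    have hPle : Pg ≤ (Subgroup.normalizer (Np : Set G)) := ppi_le_normalizer_inf hNnorm
    have hNL : (Subgroup.normalizer (L : Set G)) ≤ (Subgroup.normalizer (Np : Set G)) := by
      have h5 := ppi_normalizer_le_inf (L := L) hNnorm
      rwa [← hKdef, hKNp] at h5
    have hNpnormal : Np.Normal := ppi_core_normal hPle hNL hPind hq
    rcases hNmin Np hNpnormal hNpN with h | h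
    · exact absurd h hNpbot
    · exact ⟨h ▸ hNpPgroup, by rw [← h]; exact hcd⟩
  · -- Case A : `d < |Np|`.  Choose `H ≤ Np` of order `d` normal in `P`.
    push_neg at hcd
    haveI hNpgsub : (Np.subgroupOf Pg).Normal := by
      constructor
      intro x hx g'
      rw [Subgroup.mem_subgroupOf] at hx ⊢
      constructor
      · exact (g' * x * g'⁻¹).2
      · have h6 : ((g' * x * g'⁻¹ : ↥Pg) : G) = (g' : G) * (x : G) * (g' : G)⁻¹ := by
          push_cast
          rfl
        rw [h6]
        exact hNnorm.conj_mem _ hx.2 _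
    have hac : a ≤ c := by
      have h2 : p ^ a < p ^ c := by rw [← hda, ← hc]; exact hcd
      exact le_of_lt ((Nat.pow_lt_pow_iff_right hp.one_lt).mp h2)
    have hdvdNp : p ^ a ∣ Nat.card (Np.subgroupOf Pg) := by
      rw [Nat.card_congr (Subgroup.subgroupOfEquivOfLe hNpP).toEquiv, hc]
      exact pow_dvd_pow p hac
    obtain ⟨Hs, hHsM, hHsn, hHscard⟩ :=
      ppi_exists_normal_subgroup P.isPGroup' (Np.subgroupOf Pg) hNpgsub a hdvdNp
    set H := Hs.map Pg.subtype with hHdef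
    have hHle : H ≤ Pg := Subgroup.map_subtype_le Hs
    have hHcard : Nat.card H = d := by
      rw [hda, ← hHscard]
      exact (Nat.card_congr
        (Subgroup.equivMapOfInjective Hs Pg.subtype Pg.subtype_injective).toEquiv).symm
    have hHNp : H ≤ Np := by
      have h1 := Subgroup.map_mono (f := Pg.subtype) hHsM
      rw [Subgroup.subgroupOf_map_subtype] at h1
      exact h1.trans inf_le_left
    have hHN : H ≤ N := hHNp.trans hNpN
    have hHbot : H ≠ ⊥ := by
      intro h
      rw [h, Subgroup.card_bot] at hHcard
      omega
    obtain ⟨C, hstep⟩ := hPi H hHle hHcard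
    obtain ⟨i, hiA, hiB⟩ := ppi_exists_jump C hNbot
    set A := C.s i.castSucc with hAdef
    set B := C.s i.succ with hBdef
    haveI hAn : A.Normal := C.normal _
    haveI hBn : B.Normal := C.normal _
    have hNB : N ≤ B := by
      rcases hNmin (N ⊓ B) (ppi_normal_inf hNnorm hBn) inf_le_left with h | h
      · exact absurd h hiB
      · exact inf_eq_left.mp h
    have hAB : A ≤ B := le_of_lt (C.strict i)
    set L := (H ⊔ A) ⊓ B with hLdef
    have hAL : A ≤ L := le_inf le_sup_right hAB
    have hreldvd : A.relIndex L ∣ d := by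
      have h1 : A.relIndex L ∣ A.relIndex (H ⊔ A) :=
        ⟨L.relIndex (H ⊔ A), (Subgroup.relIndex_mul_relIndex A L (H ⊔ A) hAL inf_le_left).symm⟩
      refine h1.trans ?_
      rw [← hHcard]
      exact ppi_relindex_sup_dvd H A
    have hq : ∀ q : ℕ, q.Prime → q ∣ (Subgroup.normalizer (L : Set G)).index → q = p := by
      intro q hq1 hq2
      have h3 := hstep i q hq1 hq2
      rw [ppi_card_div_eq_relindex hAL] at h3
      have h4 : q ∣ d := h3.trans hreldvd
      rw [hda] at h4
      exact (Nat.prime_dvd_prime_iff_eq hq1 hp).mp (hq1.dvd_of_dvd_pow h4)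
    set K := L ⊓ N with hKdef
    have hHK : H ≤ K := le_inf (le_inf le_sup_left (hHN.trans hNB)) hHN
    have hKH : K ≤ H := by
      have hded := ppi_dedekind (A := A) hHN hiA
      intro x hx
      exact hded ⟨hx.2, hx.1.1⟩
    have hKeq : K = H := le_antisymm hKH hHK
    have hPle : Pg ≤ (Subgroup.normalizer (H : Set G)) := ppi_map_subtype_normalizer hHsn
    have hNL : (Subgroup.normalizer (L : Set G)) ≤ (Subgroup.normalizer (H : Set G)) := by
      have h5 := ppi_normalizer_le_inf (L := L) hNnorm
      rwa [← hKdef, hKeq] at h5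
    have hHnormal : H.Normal := ppi_core_normal hPle hNL hPind hq
    rcases hNmin H hHnormal hHN with h | h
    · exact absurd h hHbot
    · exfalso
      have h1 : Nat.card Np ∣ Nat.card N := Subgroup.card_dvd_of_le hNpN
      rw [← h, hHcard] at h1
      have h2 := Nat.le_of_dvd (by omega) h1
      omega
end

section
/- Let p be a prime, G a finite group with Sylow p-subgroup P, and d a power of p with 1 < d < |P|. Assume every subgroup of P of order d satisfies the partial Π-property in G. If G has a minimal normal subgroup of order d, then every minimal normal p-subgroup of G has order d. -/
variable {G : Type*} [Group G]

section AuxLemmas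

open Pointwise

variable {G : Type*} [Group G]

lemma myNormalInf {H K : Subgroup G} (hH : H.Normal) (hK : K.Normal) : (H ⊓ K).Normal :=
  ⟨fun x hx g => ⟨hH.conj_mem x hx.1 g, hK.conj_mem x hx.2 g⟩⟩

lemma myCardSup (H A : Subgroup G) [A.Normal] (h : H ⊓ A = ⊥) :
    Nat.card ↥(H ⊔ A) = Nat.card H * Nat.card A := by
  rw [← Nat.card_prod]
  refine Nat.card_congr ((Equiv.ofBijective
    (fun x : ↥H × ↥A => (⟨(x.1 : G) * (x.2 : G),
      mul_mem ((le_sup_left : H ≤ H ⊔ A) x.1.2) ((le_sup_right : A ≤ H ⊔ A) x.2.2)⟩ : ↥(H ⊔ A)))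
    ⟨?_, ?_⟩).symm)
  · rintro ⟨x1, x2⟩ ⟨y1, y2⟩ heq
    simp only [Subtype.mk.injEq] at heq
    have e : (y1 : G)⁻¹ * (x1 : G) = (y2 : G) * (x2 : G)⁻¹ := by
      have h' : (y1 : G)⁻¹ * ((x1 : G) * (x2 : G)) * (x2 : G)⁻¹ =
          (y1 : G)⁻¹ * ((y1 : G) * (y2 : G)) * (x2 : G)⁻¹ := by rw [heq]
      calc (y1 : G)⁻¹ * (x1 : G)
          = (y1 : G)⁻¹ * ((x1 : G) * (x2 : G)) * (x2 : G)⁻¹ := by group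
        _ = (y1 : G)⁻¹ * ((y1 : G) * (y2 : G)) * (x2 : G)⁻¹ := h'
        _ = (y2 : G) * (x2 : G)⁻¹ := by group
    have key : (y1 : G)⁻¹ * (x1 : G) ∈ H ⊓ A :=
      Subgroup.mem_inf.mpr ⟨mul_mem (inv_mem y1.2) x1.2, e ▸ mul_mem y2.2 (inv_mem x2.2)⟩
    rw [h, Subgroup.mem_bot] at key
    have e1 : (y1 : G) = (x1 : G) := inv_mul_eq_one.mp key
    have e2 : (x2 : G) = (y2 : G) := by
      apply mul_left_cancel (a := (x1 : G))
      rw [heq, ← e1]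
    exact Prod.ext (Subtype.ext e1.symm) (Subtype.ext e2)
  · rintro ⟨x, hx⟩
    rw [← SetLike.mem_coe, Subgroup.mul_normal] at hx
    obtain ⟨h1, hh1, a1, ha1, rfl⟩ := hx
    exact ⟨(⟨h1, hh1⟩, ⟨a1, ha1⟩), rfl⟩

lemma mySupInf {M A N : Subgroup G} [A.Normal] (hMN : M ≤ N) (hNA : N ⊓ A = ⊥) :
    (M ⊔ A) ⊓ N = M := by
  apply le_antisymm
  · intro x hx
    obtain ⟨hx1, hx2⟩ := Subgroup.mem_inf.mp hx
    rw [← SetLike.mem_coe, Subgroup.mul_normal] at hx1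
    obtain ⟨m, hm, a, ha, rfl⟩ := hx1
    have haN : a ∈ N := by
      have := mul_mem (inv_mem (hMN hm)) hx2
      simpa [mul_assoc] using this
    have : a ∈ N ⊓ A := ⟨haN, ha⟩
    rw [hNA, Subgroup.mem_bot] at this
    simpa [this] using hm
  · exact le_inf le_sup_left hMN

lemma myNormalizerInf (K N : Subgroup G) (hN : N.Normal) :
    Subgroup.normalizer (K : Set G) ≤ Subgroup.normalizer ((K ⊓ N : Subgroup G) : Set G) := by
  intro g hg
  rw [Subgroup.mem_normalizer_iff] at hg ⊢
  intro x
  constructor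
  · intro hmem
    obtain ⟨h1, h2⟩ := Subgroup.mem_inf.mp hmem
    exact Subgroup.mem_inf.mpr ⟨(hg x).mp h1, hN.conj_mem x h2 g⟩
  · intro hmem
    obtain ⟨h1, h2⟩ := Subgroup.mem_inf.mp hmem
    refine Subgroup.mem_inf.mpr ⟨(hg x).mpr h1, ?_⟩
    have := hN.conj_mem _ h2 g⁻¹
    have e : g⁻¹ * (g * x * g⁻¹) * g⁻¹⁻¹ = x := by group
    rwa [e] at this

lemma myLeNormalizer {P M : Subgroup G} (h : ∀ g ∈ P, ∀ m ∈ M, g * m * g⁻¹ ∈ M) :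
    P ≤ (Subgroup.normalizer (M : Set G)) := by
  intro g hg
  rw [Subgroup.mem_normalizer_iff]
  intro x
  constructor
  · exact fun hx => h g hg x hx
  · intro hx
    have := h g⁻¹ (inv_mem hg) _ hx
    have e : g⁻¹ * (g * x * g⁻¹) * g⁻¹⁻¹ = x := by group
    rwa [e] at this

lemma myNormalCrit [Finite G] {p : ℕ} (hp : p.Prime) (P : Sylow p G)
    (M : Subgroup G) (hle : (P : Subgroup G) ≤ (Subgroup.normalizer (M : Set G)))
    (hq : ∀ q : ℕ, q.Prime → q ∣ (Subgroup.normalizer (M : Set G)).index → q = p) : M.Normal := by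
  haveI : Fact p.Prime := ⟨hp⟩
  rw [← Subgroup.normalizer_eq_top_iff]
  by_contra hne
  have h1 : (Subgroup.normalizer (M : Set G)).index ≠ 1 := fun h => hne (Subgroup.index_eq_one.mp h)
  obtain ⟨q, hqp, hqd⟩ := Nat.exists_prime_and_dvd h1
  have hqq : q = p := hq q hqp hqd
  subst hqq
  have hdvd : (Subgroup.normalizer (M : Set G)).index ∣ (P : Subgroup G).index := Subgroup.index_dvd_of_le hle
  exact P.not_dvd_index (hqd.trans hdvd)

lemma myLeSylow [Finite G] {p : ℕ} (hp : p.Prime) (P : Sylow p G)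
    {Q : Subgroup G} (hQn : Q.Normal) (hQ : IsPGroup p ↥Q) : Q ≤ P := by
  haveI : Fact p.Prime := ⟨hp⟩
  obtain ⟨R, hR⟩ := hQ.exists_le_sylow
  obtain ⟨g, hg⟩ := MulAction.exists_smul_eq G R P
  intro x hx
  rw [← hg]
  have h1 : g⁻¹ * x * g ∈ R := by
    have := hQn.conj_mem x hx g⁻¹
    rw [inv_inv] at this
    exact hR this
  show x ∈ MulAut.conj g • (R : Subgroup G)
  rw [Subgroup.mem_pointwise_smul_iff_inv_smul_mem, ← map_inv, MulAut.smul_def,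
    MulAut.conj_apply, inv_inv]
  exact h1

lemma myCenterMeet {P : Type*} [Group P] [Finite P] {p : ℕ} (hp : p.Prime)
    (hP : IsPGroup p P) {Q : Subgroup P} (hQn : Q.Normal) (hQb : Q ≠ ⊥) :
    ∃ z : P, z ∈ Q ∧ z ∈ Subgroup.center P ∧ z ≠ 1 := by
  haveI : Fact p.Prime := ⟨hp⟩
  letI : MulAction P ↥Q := MulAction.compHom _ (MulAut.conjNormal : P →* MulAut Q)
  have hsmul : ∀ (g : P) (q : ↥Q), ((g • q : ↥Q) : P) = g * q * g⁻¹ := fun g q =>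
    MulAut.conjNormal_apply g q
  have hpQ : p ∣ Nat.card ↥Q := by
    obtain ⟨k, hk⟩ := (hP.to_subgroup Q).exists_card_eq
    match k, hk with
    | 0, hk => exact absurd (Subgroup.card_eq_one.mp (by simpa using hk)) hQb
    | (k+1), hk => exact hk ▸ dvd_pow_self p (Nat.succ_ne_zero k)
  have h1 : (1 : ↥Q) ∈ MulAction.fixedPoints P ↥Q := by
    intro g
    apply Subtype.ext
    rw [hsmul]
    simp
  obtain ⟨b, hb, hb1⟩ := hP.exists_fixed_point_of_prime_dvd_card_of_fixed_point ↥Q hpQ h1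
  refine ⟨(b : P), b.2, ?_, ?_⟩
  · rw [Subgroup.mem_center_iff]
    intro g
    have hfix : g • b = b := hb g
    have e : g * (b : P) * g⁻¹ = (b : P) := by rw [← hsmul g b, hfix]
    calc g * (b : P) = (g * b * g⁻¹) * g := by group
      _ = (b : P) * g := by rw [e]
  · intro h
    exact hb1 (OneMemClass.coe_eq_one.mp h).symm

lemma myExistsNormalLe {P : Type*} [Group P] [Finite P] {p : ℕ} (hp : p.Prime)
    (hP : IsPGroup p P) : ∀ (k : ℕ) (Q : Subgroup P), Q.Normal → p ^ k ∣ Nat.card Q →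
    ∃ M : Subgroup P, M ≤ Q ∧ M.Normal ∧ Nat.card M = p ^ k := by
  haveI : Fact p.Prime := ⟨hp⟩
  intro k
  induction k with
  | zero =>
    intro Q _ _
    exact ⟨⊥, bot_le, inferInstance, by simpa using Subgroup.card_bot⟩
  | succ k ih =>
    intro Q hQn hdvd
    obtain ⟨M, hMQ, hMn, hMc⟩ := ih Q hQn ((pow_dvd_pow p (Nat.le_succ k)).trans hdvd)
    haveI := hMn
    set π := QuotientGroup.mk' M with hπ
    have hπs : Function.Surjective π := QuotientGroup.mk'_surjective M
    have hQ'n : (Q.map π).Normal := hQn.map π hπs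
    have hQ'b : Q.map π ≠ ⊥ := by
      intro hbot
      rw [Subgroup.map_eq_bot_iff, QuotientGroup.ker_mk'] at hbot
      have hQM : Q = M := le_antisymm hbot hMQ
      rw [hQM, hMc] at hdvd
      have := Nat.le_of_dvd (pow_pos hp.pos _) hdvd
      exact absurd this (Nat.not_le.mpr (Nat.pow_lt_pow_succ hp.one_lt))
    obtain ⟨z, hzQ, hzc, hz1⟩ := myCenterMeet hp (hP.to_quotient M) hQ'n hQ'b
    obtain ⟨i, hi⟩ := (hP.to_quotient M) z
    have hzo : orderOf z ∣ p ^ i := orderOf_dvd_of_pow_eq_one hi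
    obtain ⟨i', hi'le, hio⟩ := (Nat.dvd_prime_pow hp).mp hzo
    have hi0 : i' ≠ 0 := by
      rintro rfl
      rw [pow_zero] at hio
      exact hz1 (orderOf_eq_one_iff.mp hio)
    set y := z ^ (p ^ (i' - 1)) with hy
    have hyp : y ^ p = 1 := by
      rw [hy, ← pow_mul, ← pow_succ, Nat.sub_add_cancel (Nat.one_le_iff_ne_zero.mpr hi0),
        ← hio, pow_orderOf_eq_one]
    have hy1 : y ≠ 1 := by
      intro h
      have hdvd' : orderOf z ∣ p ^ (i' - 1) := orderOf_dvd_of_pow_eq_one h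
      rw [hio] at hdvd'
      have hle' := Nat.le_of_dvd (pow_pos hp.pos _) hdvd'
      exact absurd hle' (Nat.not_le.mpr
        (Nat.pow_lt_pow_right hp.one_lt (Nat.sub_lt (Nat.pos_of_ne_zero hi0) one_pos)))
    have hyo : orderOf y = p := orderOf_eq_prime hyp hy1
    have hyQ : y ∈ Q.map π := pow_mem hzQ _
    have hyc : y ∈ Subgroup.center (P ⧸ M) := pow_mem hzc _
    set Z := Subgroup.zpowers y with hZ
    have hZc : Z ≤ Subgroup.center _ := Subgroup.zpowers_le.mpr hyc
    haveI hZn : Z.Normal := by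
      constructor
      intro x hx g
      have hxc := Subgroup.mem_center_iff.mp (hZc hx) g
      have e : g * x * g⁻¹ = x := by rw [hxc]; group
      rwa [e]
    set M' := Z.comap π with hM'
    haveI hM'n : M'.Normal := hZn.comap π
    have hM'Q : M' ≤ Q := by
      intro x hx
      have hxZ : π x ∈ Q.map π := (Subgroup.zpowers_le.mpr hyQ) hx
      obtain ⟨q, hq, hq2⟩ := hxZ
      have hqm : q⁻¹ * x ∈ M := QuotientGroup.eq.mp hq2
      have hxq : x = q * (q⁻¹ * x) := by group
      rw [hxq]
      exact mul_mem hq (hMQ hqm)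
    have hZcard : Nat.card Z = p := by rw [hZ, Nat.card_zpowers, hyo]
    have hidx : M'.index = Z.index := Subgroup.index_comap_of_surjective Z hπs
    have h1 : Nat.card M' * M'.index = Nat.card P := Subgroup.card_mul_index M'
    have h2 : Nat.card Z * Z.index = Nat.card (P ⧸ M) := Subgroup.card_mul_index Z
    have h3 : Nat.card P = Nat.card (P ⧸ M) * Nat.card M :=
      Subgroup.card_eq_card_quotient_mul_card_subgroup M
    have hfin : M'.index ≠ 0 := Subgroup.index_ne_zero_of_finite
    have hkey : Nat.card M' * M'.index = (p * p ^ k) * M'.index := by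
      rw [h1, h3, ← h2, hZcard, hidx, hMc]
      ring
    have hcard : Nat.card M' = p * p ^ k :=
      Nat.eq_of_mul_eq_mul_right (Nat.pos_of_ne_zero hfin) hkey
    exact ⟨M', hM'Q, hM'n, by rw [hcard, pow_succ]; ring⟩

lemma myExistsPInv {G : Type*} [Group G] [Finite G] {p : ℕ} (hp : p.Prime) (P : Sylow p G)
    {W : Subgroup G} (hWn : W.Normal) (hWP : W ≤ P) {c : ℕ} (hdvd : p ^ c ∣ Nat.card W) :
    ∃ M : Subgroup G, M ≤ W ∧ (∀ g ∈ (P : Subgroup G), ∀ m ∈ M, g * m * g⁻¹ ∈ M) ∧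
      Nat.card M = p ^ c := by
  set Q := W.subgroupOf (P : Subgroup G) with hQ
  haveI hQn : Q.Normal := hWn.subgroupOf _
  have hcard : Nat.card Q = Nat.card W :=
    Nat.card_congr (Subgroup.subgroupOfEquivOfLe hWP).toEquiv
  obtain ⟨M', hM'Q, hM'n, hM'c⟩ := myExistsNormalLe hp P.isPGroup' c Q hQn (hcard ▸ hdvd)
  refine ⟨M'.map (P : Subgroup G).subtype, ?_, ?_, ?_⟩
  · calc M'.map (P : Subgroup G).subtype ≤ Q.map (P : Subgroup G).subtype :=
        Subgroup.map_mono hM'Q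
      _ = W ⊓ (P : Subgroup G) := Subgroup.subgroupOf_map_subtype W _
      _ ≤ W := inf_le_left
  · intro g hg m hm
    obtain ⟨m', hm', rfl⟩ := hm
    have hc := hM'n.conj_mem m' hm' ⟨g, hg⟩
    exact ⟨_, hc, rfl⟩
  · rw [← hM'c]
    exact (Nat.card_congr (Subgroup.equivMapOfInjective M' _
      (Subgroup.subtype_injective _)).toEquiv).symm

lemma myTrace {G : Type*} [Group G] (C : ChiefSeries G) {N : Subgroup G}
    (hN : IsMinNormal N) :
    ∃ j : Fin C.n, N ⊓ C.s j.castSucc = ⊥ ∧ N ≤ C.s j.succ := by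
  suffices h : ∀ (k : ℕ) (hk : k < C.n + 1), N ≤ C.s ⟨k, hk⟩ →
      ∃ j : Fin C.n, N ⊓ C.s j.castSucc = ⊥ ∧ N ≤ C.s j.succ by
    refine h C.n (Nat.lt_succ_self _) ?_
    have := C.top_eq
    rw [show (Fin.last C.n) = ⟨C.n, Nat.lt_succ_self _⟩ from rfl] at this
    rw [this]
    exact le_top
  intro k
  induction k with
  | zero =>
    intro hk h0
    exfalso
    apply hN.2.1
    rw [show (⟨0, hk⟩ : Fin (C.n + 1)) = 0 from by ext; simp, C.bot_eq] at h0
    exact le_bot_iff.mp h0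
  | succ k ih =>
    intro hk hle
    have hk' : k < C.n + 1 := by omega
    have hkn : k < C.n := by omega
    have hcs : (⟨k, hkn⟩ : Fin C.n).castSucc = ⟨k, hk'⟩ := rfl
    have hsc : (⟨k, hkn⟩ : Fin C.n).succ = ⟨k + 1, hk⟩ := rfl
    have hnormal : (N ⊓ C.s (⟨k, hkn⟩ : Fin C.n).castSucc).Normal :=
      myNormalInf hN.1 (C.normal _)
    rcases hN.2.2 _ hnormal inf_le_left with hb | hNle
    · exact ⟨⟨k, hkn⟩, hb, by rw [hsc]; exact hle⟩
    · exact ih hk' (by rw [← hcs]; exact inf_eq_left.mp hNle)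

lemma myStepContra {G : Type*} [Group G] [Finite G] {p : ℕ} (hp : p.Prime) (P : Sylow p G)
    {W M H : Subgroup G} (hW : IsMinNormal W) (hMW : M ≤ W)
    (hMnorm : (P : Subgroup G) ≤ (Subgroup.normalizer (M : Set G))) {c : ℕ} (hc : 0 < c)
    (hMcard : Nat.card M = p ^ c) (hlt : Nat.card M < Nat.card W)
    {C : ChiefSeries G} {j : Fin C.n} (hstep : PartialPiStep H C j)
    (hKeq : (H ⊔ C.s j.castSucc) ⊓ C.s j.succ = M ⊔ C.s j.castSucc)
    (hWA : W ⊓ C.s j.castSucc = ⊥) : False := by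
  set A := C.s j.castSucc with hA
  haveI hAn : A.Normal := C.normal _
  have hMA : M ⊓ A = ⊥ := le_bot_iff.mp (hWA ▸ inf_le_inf_right A hMW)
  have hMWinf : (M ⊔ A) ⊓ W = M := mySupInf hMW hWA
  have hcardK : Nat.card ↥(M ⊔ A) / Nat.card A = Nat.card M := by
    rw [myCardSup M A hMA, Nat.mul_div_cancel _ Nat.card_pos]
  have hqual : ∀ q : ℕ, q.Prime → q ∣ (Subgroup.normalizer (M : Set G)).index → q = p := by
    intro q hq hqd
    have h1 : (Subgroup.normalizer ((M ⊔ A : Subgroup G) : Set G)) ≤ (Subgroup.normalizer (M : Set G)) := by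
      have := myNormalizerInf (M ⊔ A) W hW.1
      rwa [hMWinf] at this
    have h2 : q ∣ (Subgroup.normalizer ((M ⊔ A : Subgroup G) : Set G)).index := hqd.trans (Subgroup.index_dvd_of_le h1)
    have h3 := hstep q hq (by rw [hKeq]; exact h2)
    rw [hKeq, hcardK, hMcard] at h3
    exact (Nat.prime_dvd_prime_iff_eq hq hp).mp (hq.dvd_of_dvd_pow h3)
  have hMn : M.Normal := myNormalCrit hp P M hMnorm hqual
  rcases hW.2.2 M hMn hMW with h | h
  · rw [h, Subgroup.card_bot] at hMcard
    exact absurd hMcard.symm (Nat.ne_of_gt (Nat.one_lt_pow hc.ne' hp.one_lt))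
  · rw [h] at hlt
    exact lt_irrefl _ hlt

end AuxLemmas


theorem statement_4 {G : Type*} [Group G] [Finite G] {p : ℕ} (hp : p.Prime)
    (P : Sylow p G) (d : ℕ) (hdpow : ∃ a : ℕ, d = p ^ a)
    (hd1 : 1 < d) (hd2 : d < Nat.card (P : Subgroup G))
    (hPi : ∀ H : Subgroup G, H ≤ P → Nat.card H = d → PartialPi H)
    (N₀ : Subgroup G) (hN₀ : IsMinNormal N₀) (hcard₀ : Nat.card N₀ = d) :
    ∀ N : Subgroup G, IsMinNormal N → IsPGroup p N → Nat.card N = d := by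
  intro N hN hNp
  by_contra hne
  haveI : Fact p.Prime := ⟨hp⟩
  obtain ⟨a, hd⟩ := hdpow
  have ha : 0 < a := by
    rcases Nat.eq_zero_or_pos a with h | h
    · rw [h, pow_zero] at hd; omega
    · exact h
  have hNP : N ≤ P := myLeSylow hp P hN.1 hNp
  obtain ⟨b, hbcard⟩ := hNp.exists_card_eq
  have hb0 : 0 < b := by
    rcases Nat.eq_zero_or_pos b with h | h
    · rw [h, pow_zero] at hbcard
      exact absurd (Subgroup.card_eq_one.mp hbcard) hN.2.1
    · exact h
  rcases lt_trichotomy (Nat.card N) d with hlt | heq | hgt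
  · -- case |N| < d
    have hN0p : IsPGroup p ↥N₀ := IsPGroup.of_card (by rw [hcard₀, hd])
    have hN0P : N₀ ≤ P := myLeSylow hp P hN₀.1 hN0p
    have hNN0 : N ⊓ N₀ = ⊥ := by
      rcases hN.2.2 (N ⊓ N₀) (myNormalInf hN.1 hN₀.1) inf_le_left with h | h
      · exact h
      · exfalso
        rcases hN₀.2.2 N hN.1 (inf_eq_left.mp h) with h2 | h2
        · exact hN.2.1 h2
        · exact hne (by rw [h2, hcard₀])
    have hba : b < a := by
      rw [hbcard, hd] at hlt
      exact (Nat.pow_lt_pow_iff_right hp.one_lt).mp hlt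
    obtain ⟨M, hMN0, hMconj, hMcard⟩ := myExistsPInv hp P hN₀.1 hN0P (c := a - b)
      (by rw [hcard₀, hd]; exact pow_dvd_pow p (Nat.sub_le a b))
    have hMnorm := myLeNormalizer hMconj
    have hMN : M ⊓ N = ⊥ := by
      have h1 : M ⊓ N ≤ N ⊓ N₀ := le_inf inf_le_right (inf_le_left.trans hMN0)
      exact le_bot_iff.mp (hNN0 ▸ h1)
    haveI := hN.1
    have hHcard : Nat.card ↥(M ⊔ N) = d := by
      rw [myCardSup M N hMN, hMcard, hbcard, hd, ← pow_add,
        Nat.sub_add_cancel hba.le]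
    have hHP : M ⊔ N ≤ P := sup_le (hMN0.trans hN0P) hNP
    obtain ⟨C, hC⟩ := hPi (M ⊔ N) hHP hHcard
    obtain ⟨j, hj1, hj2⟩ := myTrace C hN₀
    set A := C.s j.castSucc with hA
    set B := C.s j.succ with hB
    haveI hAn : A.Normal := C.normal _
    haveI hBn : B.Normal := C.normal _
    have hAB : A ≤ B := (C.strict j).le
    have hMB : M ≤ B := hMN0.trans hj2
    haveI := hN₀.1
    have hMltW : Nat.card M < Nat.card N₀ := by
      rw [hMcard, hcard₀, hd]
      exact Nat.pow_lt_pow_right hp.one_lt (by omega)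
    rcases hN.2.2 (N ⊓ A) (myNormalInf hN.1 hAn) inf_le_left with hNA | hNA
    · rcases hN.2.2 (N ⊓ B) (myNormalInf hN.1 hBn) inf_le_left with hNB | hNB
      · -- N ⊓ B = ⊥
        have hKeq : ((M ⊔ N) ⊔ A) ⊓ B = M ⊔ A := by
          apply le_antisymm
          · intro x hx
            obtain ⟨hx1, hx2⟩ := Subgroup.mem_inf.mp hx
            have hre : (M ⊔ N) ⊔ A = N ⊔ (M ⊔ A) := by
              rw [sup_comm M N, sup_assoc]
            rw [hre, ← SetLike.mem_coe, Subgroup.normal_mul] at hx1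
            obtain ⟨n, hn, y, hy, rfl⟩ := hx1
            have hyB : y ∈ B := (sup_le hMB hAB) hy
            have hnB : n ∈ B := by
              have := mul_mem hx2 (inv_mem hyB)
              simpa [mul_assoc] using this
            have hmem : n ∈ N ⊓ B := Subgroup.mem_inf.mpr ⟨hn, hnB⟩
            rw [hNB, Subgroup.mem_bot] at hmem
            simpa [hmem] using hy
          · exact le_inf (sup_le (le_sup_left.trans le_sup_left) le_sup_right)
              (sup_le hMB hAB)
        exact myStepContra hp P hN₀ hMN0 hMnorm (by omega : 0 < a - b) hMcard hMltW
          (hC j) hKeq hj1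
      · -- N ≤ B and N ⊓ A = ⊥
        have hNleB : N ≤ B := inf_eq_left.mp hNB
        have h1 : N ⊔ A = B := by
          rcases C.chief j (N ⊔ A) inferInstance le_sup_right (sup_le hNleB hAB) with h | h
          · exfalso
            have hle' : N ≤ A := le_sup_left.trans h.le
            have : N = ⊥ := by rw [← hNA, inf_eq_left.mpr hle']
            exact hN.2.1 this
          · exact h
        have h2 : N₀ ⊔ A = B := by
          rcases C.chief j (N₀ ⊔ A) inferInstance le_sup_right (sup_le hj2 hAB) with h | h
          · exfalso
            have hle' : N₀ ≤ A := le_sup_left.trans h.le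
            have : N₀ = ⊥ := by rw [← hj1, inf_eq_left.mpr hle']
            exact hN₀.2.1 this
          · exact h
        have e1 : Nat.card ↥B = Nat.card N * Nat.card A := by
          rw [← h1]; exact myCardSup N A hNA
        have e2 : Nat.card ↥B = Nat.card N₀ * Nat.card A := by
          rw [← h2]
          haveI := hN₀.1
          exact myCardSup N₀ A hj1
        have : Nat.card N = Nat.card N₀ :=
          Nat.eq_of_mul_eq_mul_right Nat.card_pos (e1.symm.trans e2)
        exact hne (by rw [this, hcard₀])
    · -- N ≤ A
      have hNleA : N ≤ A := inf_eq_left.mp hNA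
      have hKeq : ((M ⊔ N) ⊔ A) ⊓ B = M ⊔ A := by
        have hre : (M ⊔ N) ⊔ A = M ⊔ A := by
          rw [sup_assoc, sup_eq_right.mpr hNleA]
        rw [hre]
        exact inf_eq_left.mpr (sup_le hMB hAB)
      exact myStepContra hp P hN₀ hMN0 hMnorm (by omega : 0 < a - b) hMcard hMltW
        (hC j) hKeq hj1
  · exact hne heq
  · -- case |N| > d
    have hab : a < b := by
      rw [hbcard, hd] at hgt
      exact (Nat.pow_lt_pow_iff_right hp.one_lt).mp hgt
    obtain ⟨M, hMN, hMconj, hMcard⟩ := myExistsPInv hp P hN.1 hNP (c := a)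
      (by rw [hbcard]; exact pow_dvd_pow p hab.le)
    have hMnorm := myLeNormalizer hMconj
    have hMd : Nat.card M = d := by rw [hMcard, hd]
    obtain ⟨C, hC⟩ := hPi M (hMN.trans hNP) hMd
    obtain ⟨j, hj1, hj2⟩ := myTrace C hN
    have hKeq : (M ⊔ C.s j.castSucc) ⊓ C.s j.succ = M ⊔ C.s j.castSucc :=
      inf_eq_left.mpr (sup_le (hMN.trans hj2) (C.strict j).le)
    have hMltN : Nat.card M < Nat.card N := by rw [hMd]; exact hgt
    exact myStepContra hp P hN hMN hMnorm ha hMcard hMltN (hC j) hKeq hj1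
end

section
/- Let p be a prime, G a finite group, N a minimal normal subgroup of G, and K a subgroup of G with |N| = |K| = p. If the subgroup NK satisfies the partial Π-property in G, then K also satisfies the partial Π-property in G. -/
variable {G : Type*} [Group G]

section MyHelpers
open Pointwise

variable {G : Type*} [Group G]

/-- Dedekind modular law with a normal subgroup on the left. -/
lemma my_modular (N A B : Subgroup G) (hN : N.Normal) (h : N ≤ A) :
    A ⊓ (N ⊔ B) = N ⊔ (A ⊓ B) := by
  haveI := hN
  apply le_antisymm
  · rintro x ⟨hxA, hxNB⟩
    have hx : x ∈ ((N : Set G) * (B : Set G)) := by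
      rw [← Subgroup.normal_mul]; exact hxNB
    obtain ⟨a, ha, b, hb, rfl⟩ := hx
    have hbA : b ∈ A := by
      have h1 : a⁻¹ ∈ A := inv_mem (h ha)
      simpa using mul_mem h1 hxA
    exact mul_mem (Subgroup.mem_sup_left ha)
      (Subgroup.mem_sup_right (Subgroup.mem_inf.mpr ⟨hbA, hb⟩))
  · exact sup_le (le_inf h le_sup_left) (inf_le_inf_left A le_sup_right)

lemma my_sup_lt_sup (N A B : Subgroup G) (hN : N.Normal) (hAB : A < B)
    (hNB : N ⊓ B = ⊥) : N ⊔ A < N ⊔ B := by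
  haveI := hN
  refine lt_of_le_of_ne (sup_le_sup_left hAB.le N) (fun heq => ?_)
  have hBA : B ≤ A := by
    intro b hb
    have hb' : b ∈ ((N : Set G) * (A : Set G)) := by
      rw [← Subgroup.normal_mul, heq]
      exact Subgroup.mem_sup_right hb
    obtain ⟨x, hx, a, ha, hab⟩ := hb'
    have hab : x * a = b := hab
    have hxB : x ∈ B := by
      have : b * a⁻¹ ∈ B := mul_mem hb (inv_mem (hAB.le ha))
      rwa [← hab, mul_inv_cancel_right] at this
    have : x ∈ N ⊓ B := Subgroup.mem_inf.mpr ⟨hx, hxB⟩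
    rw [hNB, Subgroup.mem_bot] at this
    rw [← hab, this, one_mul]
    exact ha
  exact hAB.ne (le_antisymm hAB.le hBA)

lemma my_normalizer_le (N L : Subgroup G) (hN : N.Normal) :
    Subgroup.normalizer (L : Set G) ≤ Subgroup.normalizer ((N ⊔ L : Subgroup G) : Set G) := by
  haveI := hN
  intro g hg
  rw [Subgroup.mem_normalizer_iff] at hg ⊢
  intro x
  constructor
  · intro hx
    have hx' : x ∈ ((N : Set G) * (L : Set G)) := by rw [← Subgroup.normal_mul]; exact hx
    obtain ⟨a, ha, b, hb, rfl⟩ := hx'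
    have : g * (a * b) * g⁻¹ = (g * a * g⁻¹) * (g * b * g⁻¹) := by group
    rw [this]
    exact mul_mem (Subgroup.mem_sup_left (hN.conj_mem a ha g))
      (Subgroup.mem_sup_right ((hg b).mp hb))
  · intro hx
    have hx' : g * x * g⁻¹ ∈ ((N : Set G) * (L : Set G)) := by
      rw [← Subgroup.normal_mul]; exact hx
    obtain ⟨a, ha, b, hb, hab⟩ := hx'
    have hab : a * b = g * x * g⁻¹ := hab
    have hxeq : x = (g⁻¹ * a * g) * (g⁻¹ * b * g) := by
      have : x = g⁻¹ * (a * b) * g := by rw [hab]; group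
      rw [this]; group
    have haN : g⁻¹ * a * g ∈ N := by
      have := hN.conj_mem a ha g⁻¹
      simpa using this
    have hbL : g⁻¹ * b * g ∈ L := by
      refine (hg (g⁻¹ * b * g)).mpr ?_
      have : g * (g⁻¹ * b * g) * g⁻¹ = b := by group
      rw [this]; exact hb
    rw [hxeq]
    exact mul_mem (Subgroup.mem_sup_left haN) (Subgroup.mem_sup_right hbL)

lemma my_card_sup [Finite G] (N L : Subgroup G) (hN : N.Normal) (h : N ⊓ L = ⊥) :
    Nat.card ↥(N ⊔ L) = Nat.card N * Nat.card L := by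
  haveI := hN
  set M := N ⊔ L with hM
  have h1 : N ≤ M := le_sup_left
  have h2 : L ≤ M := le_sup_right
  have hdisj : Disjoint (N.subgroupOf M) (L.subgroupOf M) := by
    rw [Subgroup.disjoint_def]
    intro x hx1 hx2
    rw [Subgroup.mem_subgroupOf] at hx1 hx2
    have : (x : G) ∈ N ⊓ L := Subgroup.mem_inf.mpr ⟨hx1, hx2⟩
    rw [h, Subgroup.mem_bot] at this
    exact Subtype.ext this
  have hmul : ((N.subgroupOf M : Set M) * (L.subgroupOf M : Set M)) = Set.univ := by
    ext x
    simp only [Set.mem_univ, iff_true]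
    have hx : (x : G) ∈ ((N : Set G) * (L : Set G)) := by
      rw [← Subgroup.normal_mul]; exact x.2
    obtain ⟨a, ha, b, hb, hab⟩ := hx
    exact ⟨⟨a, h1 ha⟩, Subgroup.mem_subgroupOf.mpr ha,
      ⟨b, h2 hb⟩, Subgroup.mem_subgroupOf.mpr hb, Subtype.ext hab⟩
    -- membership in coe of subgroup
  have hc := (Subgroup.isComplement'_of_disjoint_and_mul_eq_univ hdisj hmul).card_mul
  rw [← hc]
  rw [Nat.card_congr (Subgroup.subgroupOfEquivOfLe h1).toEquiv,
      Nat.card_congr (Subgroup.subgroupOfEquivOfLe h2).toEquiv]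

end MyHelpers

theorem statement_6 {G : Type*} [Group G] [Finite G] {p : ℕ} (hp : p.Prime)
    (N K : Subgroup G) (hN : IsMinNormal N) (hcardN : Nat.card N = p)
    (hcardK : Nat.card K = p) (hNK : PartialPi (N ⊔ K)) :
    PartialPi K := by
  classical
  obtain ⟨hNnorm, hNbot, hNmin⟩ := hN
  haveI := hNnorm
  by_cases hKN : K = N
  · rw [hKN]; rwa [hKN, sup_idem] at hNK
  -- K ⊓ N = ⊥
  have hKNbot : K ⊓ N = ⊥ := by
    have hdvd : Nat.card ↥(K ⊓ N) ∣ p := hcardK ▸ Subgroup.card_dvd_of_le inf_le_left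
    rcases (Nat.Prime.eq_one_or_self_of_dvd hp _ hdvd) with h1 | h1
    · exact Subgroup.card_eq_one.mp h1
    · exfalso
      have h2 : K ⊓ N = K :=
        Subgroup.eq_of_le_of_card_ge inf_le_left (by rw [h1, hcardK])
      have h3 : K ≤ N := h2 ▸ inf_le_right
      exact hKN (Subgroup.eq_of_le_of_card_ge h3 (by rw [hcardK, hcardN]))
  obtain ⟨C, hC⟩ := hNK
  set n := C.n with hn
  -- the ℕ-indexed version of the series
  set s' : ℕ → Subgroup G := fun m => C.s ⟨min m n, by omega⟩ with hs'
  have hs'lt : ∀ m (hm : m < n), s' m = C.s (Fin.castSucc ⟨m, hm⟩) := by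
    intro m hm
    simp only [hs']
    congr 1
    ext
    simp [Nat.min_eq_left hm.le]
  have hs'lt' : ∀ m (hm : m < n), s' (m + 1) = C.s (Fin.succ ⟨m, hm⟩) := by
    intro m hm
    simp only [hs']
    congr 1
    ext
    simp [Nat.min_eq_left hm]
  have hs'0 : s' 0 = ⊥ := by
    have h0 : (⟨min 0 n, by omega⟩ : Fin (n + 1)) = 0 := by ext; simp
    simp only [hs', h0, C.bot_eq]
  have hs'top : s' n = ⊤ := by
    have h0 : (⟨min n n, by omega⟩ : Fin (n + 1)) = Fin.last n := by ext; simp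
    simp only [hs', h0]; exact C.top_eq
  have hs'norm : ∀ m, (s' m).Normal := fun m => C.normal _
  have hmono : Monotone s' := by
    apply monotone_nat_of_le_succ
    intro m
    by_cases hm : m < n
    · rw [hs'lt m hm, hs'lt' m hm]
      exact (C.strict ⟨m, hm⟩).le
    · have : min (m + 1) n = min m n := by omega
      simp only [hs', this, le_refl]
  -- the pivot index j
  have hex : ∃ m, N ≤ s' m := ⟨n, hs'top ▸ le_top⟩
  set j := Nat.find hex with hjdef
  have hj : N ≤ s' j := Nat.find_spec hex
  have hjmin : ∀ m, m < j → ¬ N ≤ s' m := fun m hm => Nat.find_min hex hm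
  have hjn : j ≤ n := Nat.find_min' hex (hs'top ▸ le_top)
  have hjpos : 0 < j := by
    rcases Nat.eq_zero_or_pos j with h0 | h0
    · exfalso
      apply hNbot
      have := hj
      rw [h0, hs'0, le_bot_iff] at this
      exact this
    · exact h0
  have hNint : ∀ m, m < j → N ⊓ s' m = ⊥ := by
    intro m hm
    haveI := hs'norm m
    rcases hNmin (N ⊓ s' m) inferInstance inf_le_left with h | h
    · exact h
    · exact absurd (inf_eq_left.mp h) (hjmin m hm)
  -- the key identity N ⊔ s' (j-1) = s' j
  have hLkey : N ⊔ s' (j - 1) = s' j := by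
    have hlt : j - 1 < n := by omega
    have hsucc : j - 1 + 1 = j := by omega
    haveI := hs'norm (j - 1)
    have hchief := C.chief ⟨j - 1, hlt⟩ (N ⊔ s' (j - 1)) inferInstance
      (by rw [← hs'lt _ hlt]; exact le_sup_right)
      (by rw [← hs'lt' _ hlt, hsucc]; exact sup_le hj (hmono (by omega)))
    rw [← hs'lt _ hlt, ← hs'lt' _ hlt, hsucc] at hchief
    rcases hchief with h | h
    · exact absurd (h ▸ le_sup_left) (hjmin (j - 1) (by omega))
    · exact h
  -- the new series
  set u : ℕ → Subgroup G := fun m =>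
    if m = 0 then ⊥ else if m ≤ j then N ⊔ s' (m - 1) else s' m with hu
  have hu0 : u 0 = ⊥ := by simp [hu]
  have humid : ∀ m, 1 ≤ m → m ≤ j → u m = N ⊔ s' (m - 1) := by
    intro m h1 h2
    simp only [hu]
    rw [if_neg (by omega), if_pos h2]
  have huge : ∀ m, j ≤ m → u m = s' m := by
    intro m hm
    rcases eq_or_lt_of_le hm with h | h
    · rw [← h, humid j hjpos le_rfl, hLkey]
    · simp only [hu]
      rw [if_neg (by omega), if_neg (by omega)]
  have hunorm : ∀ m, (u m).Normal := by
    intro m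
    simp only [hu]
    split
    · infer_instance
    · split
      · haveI := hs'norm (m - 1); infer_instance
      · exact hs'norm m
  have hu1 : u 1 = N := by
    rw [humid 1 le_rfl hjpos]
    simp [hs'0]
  -- useful: N ≤ s' m for j ≤ m
  have hNle : ∀ m, j ≤ m → N ≤ s' m := fun m hm => hj.trans (hmono hm)
  -- strictness of the new series
  have hustrict : ∀ m, m < n → u m < u (m + 1) := by
    intro m hm
    rcases Nat.eq_zero_or_pos m with h0 | h0
    · subst h0
      rw [hu0, hu1]
      exact bot_lt_iff_ne_bot.mpr hNbot
    by_cases hmj : m < j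
    · rw [humid m h0 (by omega), humid (m + 1) (by omega) (by omega)]
      simp only [Nat.add_sub_cancel]
      refine my_sup_lt_sup N (s' (m - 1)) (s' m) inferInstance ?_ (hNint m hmj)
      have hlt : m - 1 < n := by omega
      have hsucc : m - 1 + 1 = m := by omega
      have := C.strict ⟨m - 1, hlt⟩
      rwa [← hs'lt _ hlt, ← hs'lt' _ hlt, hsucc] at this
    · rw [huge m (by omega), huge (m + 1) (by omega)]
      have := C.strict ⟨m, hm⟩
      rwa [← hs'lt _ hm, ← hs'lt' _ hm] at this
  -- chief property of the new series
  have huchief : ∀ m, m < n → ∀ X : Subgroup G, X.Normal →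
      u m ≤ X → X ≤ u (m + 1) → X = u m ∨ X = u (m + 1) := by
    intro m hm X hX hle1 hle2
    rcases Nat.eq_zero_or_pos m with h0 | h0
    · subst h0
      rw [hu0, hu1] at *
      exact hNmin X hX hle2
    by_cases hmj : m < j
    · rw [humid m h0 (by omega)] at hle1 ⊢
      rw [humid (m + 1) (by omega) (by omega)] at hle2 ⊢
      simp only [Nat.add_sub_cancel] at hle2 ⊢
      haveI := hs'norm m
      have hNX : N ≤ X := le_trans le_sup_left hle1
      have hXeq : X = N ⊔ (X ⊓ s' m) := by
        rw [← my_modular N X (s' m) inferInstance hNX]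
        exact (inf_eq_left.mpr hle2).symm
      have hlt : m - 1 < n := by omega
      have hsucc : m - 1 + 1 = m := by omega
      haveI : (X ⊓ s' m).Normal := by haveI := hX; infer_instance
      have hchief := C.chief ⟨m - 1, hlt⟩ (X ⊓ s' m) inferInstance
        (by
          rw [← hs'lt _ hlt]
          exact le_inf (le_trans le_sup_right hle1) (hmono (by omega)))
        (by rw [← hs'lt' _ hlt, hsucc]; exact inf_le_right)
      rw [← hs'lt _ hlt, ← hs'lt' _ hlt, hsucc] at hchief
      rcases hchief with h | h
      · left; rw [hXeq, h]
      · right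
        rw [hXeq, h]
    · rw [huge m (by omega)] at hle1 ⊢
      rw [huge (m + 1) (by omega)] at hle2 ⊢
      have hchief := C.chief ⟨m, hm⟩ X hX
        (by rwa [hs'lt _ hm] at hle1) (by rwa [hs'lt' _ hm] at hle2)
      rwa [← hs'lt _ hm, ← hs'lt' _ hm] at hchief
  have hnpos : 0 < n := by omega
  -- assemble the chief series
  refine ⟨⟨n, fun i => u i.val, by simp [hu0], ?_, fun i => hunorm _, ?_, ?_⟩, ?_⟩
  · show u (Fin.last n).val = ⊤
    rw [Fin.val_last, huge n hjn, hs'top]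
  · intro i
    show u i.castSucc.val < u i.succ.val
    rw [Fin.coe_castSucc, Fin.val_succ]
    exact hustrict i.val i.isLt
  · intro i X hX h1 h2
    have := huchief i.val i.isLt X hX
      (by simpa using h1) (by simpa using h2)
    simpa using this
  -- verify the partial Π steps for K
  · intro i
    intro q hq hqdvd
    have hm := i.isLt
    set m := i.val with hmdef
    change q ∣ (Subgroup.normalizer (((K ⊔ u i.castSucc.val) ⊓ u i.succ.val : Subgroup G) : Set G)).index at hqdvd
    rw [Fin.coe_castSucc, Fin.val_succ, ← hmdef] at hqdvd
    change q ∣ Nat.card ↥((K ⊔ u i.castSucc.val) ⊓ u i.succ.val) / Nat.card ↥(u i.castSucc.val)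
    rw [Fin.coe_castSucc, Fin.val_succ, ← hmdef]
    rcases Nat.eq_zero_or_pos m with h0 | h0
    · -- first step: the intersection is trivial
      exfalso
      rw [h0, hu0, hu1, sup_bot_eq, hKNbot] at hqdvd
      rw [Subgroup.normalizer_eq_top_iff.mpr inferInstance, Subgroup.index_top] at hqdvd
      exact hq.ne_one (Nat.dvd_one.mp hqdvd)
    by_cases hmj : m < j
    · -- middle steps
      rw [humid m h0 (by omega), humid (m + 1) (by omega) (by omega)] at hqdvd ⊢
      simp only [Nat.add_sub_cancel] at hqdvd ⊢
      set A := s' (m - 1) with hA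
      set B := s' m with hB
      have hKsup : K ⊔ (N ⊔ A) = (N ⊔ K) ⊔ A := by
        rw [← sup_assoc, sup_comm K N]
      rw [hKsup] at hqdvd ⊢
      set L := ((N ⊔ K) ⊔ A) ⊓ B with hL
      have hmodular : ((N ⊔ K) ⊔ A) ⊓ (N ⊔ B) = N ⊔ L := by
        exact my_modular N ((N ⊔ K) ⊔ A) B inferInstance (le_sup_left.trans le_sup_left)
      rw [hmodular] at hqdvd ⊢
      have hNL : N ⊓ L = ⊥ := by
        have h1 : N ⊓ L ≤ N ⊓ B := inf_le_inf_left N inf_le_right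
        rw [hNint m hmj] at h1
        exact le_bot_iff.mp h1
      have hNA : N ⊓ A = ⊥ := by
        have h1 : N ⊓ A ≤ N ⊓ B := inf_le_inf_left N (hmono (by omega))
        rw [hNint m hmj] at h1
        exact le_bot_iff.mp h1
      rw [my_card_sup N L inferInstance hNL, my_card_sup N A inferInstance hNA,
        Nat.mul_div_mul_left _ _ Nat.card_pos]
      -- transfer the normalizer condition
      have hnorm_le : Subgroup.normalizer (L : Set G) ≤ Subgroup.normalizer ((N ⊔ L : Subgroup G) : Set G) :=
        my_normalizer_le N L inferInstance
      have hidx : (Subgroup.normalizer ((N ⊔ L : Subgroup G) : Set G)).index ∣ (Subgroup.normalizer (L : Set G)).index :=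
        Subgroup.index_dvd_of_le hnorm_le
      have hqdvd' : q ∣ (Subgroup.normalizer (L : Set G)).index := hqdvd.trans hidx
      -- apply the hypothesis at the old index m - 1
      have hlt : m - 1 < n := by omega
      have hsucc : m - 1 + 1 = m := by omega
      have hstep := hC ⟨m - 1, hlt⟩ q hq
      rw [← hs'lt _ hlt, ← hs'lt' _ hlt, hsucc] at hstep
      exact hstep hqdvd'
    · -- upper steps
      rw [huge m (by omega), huge (m + 1) (by omega)] at hqdvd ⊢
      have hKsup : K ⊔ s' m = (N ⊔ K) ⊔ s' m :=
        (le_antisymm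
          (sup_le (sup_le ((hNle m (by omega)).trans le_sup_right) le_sup_left) le_sup_right)
          (sup_le (le_sup_right.trans le_sup_left) le_sup_right)).symm
      rw [hKsup] at hqdvd ⊢
      have hstep := hC ⟨m, hm⟩ q hq
      rw [← hs'lt _ hm, ← hs'lt' _ hm] at hstep
      exact hstep hqdvd
end
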